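/- arXiv:2403.07171 — 10 statements merged into one kernel-verified Lean document; each statement's English description precedes it below -/
import Mathlib

section
/- Let K = Q(√D) with D squarefree, D ∉ {0,1}. The ring of all generalized polynomials in one variable z over K taking values in Q (i.e., g(α) ∈ Q for all α ∈ K) equals the Q-subalgebra of K[z, τ(z)] generated by z + τ(z) and √D·(z − τ(z)). -/
/-
The substitution z = x + y√D, τ(z) = x − y√D is an invertible K-linear change of
variables, with inverse x = (z + τ(z))/2, y = (z − τ(z))/(2√D) = √D·(z − τ(z))/(2D). A generalized
polynomial g is ℚ-valued iff its transform h(x, y) takes rational values at all rational points.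
Then h and its image under τ (applied to the coefficients) agree on ℚ², hence everywhere since ℚ is
infinite; so the coefficients of h are τ-invariant, i.e. rational, and g = h((z + τ(z))/2, …) lies
in ℚ[z + τ(z), √D·(z − τ(z))].
-/

open MvPolynomial

section GeneralizedPolynomials

variable {F K : Type*} [Field F] [Field K] [Algebra F K]

theorem MvPolynomial.map_eq_self_of_eval_mem_range {ι : Type*} [Infinite F] (σ : K →ₐ[F] K)
    {p : MvPolynomial ι K}
    (hp : ∀ x : ι → F, eval (algebraMap F K ∘ x) p ∈ (algebraMap F K).range) :
    map (σ : K →+* K) p = p := by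
  refine funext_set _ (fun _ ↦ Set.infinite_range_of_injective (algebraMap F K).injective)
    fun y hy ↦ ?_
  obtain ⟨x, rfl⟩ := Set.range_piMap _ ▸ hy
  change eval (algebraMap F K ∘ x) (map σ p) = eval (algebraMap F K ∘ x) p
  obtain ⟨c, hc⟩ := hp x
  have hσx : (σ : K →+* K) ∘ (algebraMap F K ∘ x) = algebraMap F K ∘ x :=
    _root_.funext fun i ↦ σ.commutes (x i)
  calc eval (algebraMap F K ∘ x) (map σ p)
      = eval₂ σ ((σ : K →+* K) ∘ (algebraMap F K ∘ x)) p := by rw [eval_map, hσx]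
    _ = (σ : K →+* K) (eval (algebraMap F K ∘ x) p) := by
      rw [eval, coe_eval₂Hom, eval₂_comp_left, RingHom.comp_id]
    _ = eval (algebraMap F K ∘ x) p := by rw [← hc]; exact σ.commutes c

theorem apply_add_mul_eq_sub_mul {τ : K →ₐ[F] K} {sd : K} (hτ : τ sd = -sd) (x y : F) :
    τ (algebraMap F K x + algebraMap F K y * sd) = algebraMap F K x - algebraMap F K y * sd := by
  rw [map_add, map_mul, τ.commutes, τ.commutes, hτ]
  ring

theorem mem_range_algebraMap_of_apply_eq_self {τ : K →ₐ[F] K} {sd : K}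
    (hgen : ∀ c : K, ∃ x y : F, c = algebraMap F K x + algebraMap F K y * sd)
    (hτ : τ sd = -sd) (h2 : (2 : K) ≠ 0) (hsd : sd ≠ 0) {c : K} (hc : τ c = c) :
    c ∈ (algebraMap F K).range := by
  obtain ⟨x, y, rfl⟩ := hgen c
  rw [apply_add_mul_eq_sub_mul hτ] at hc
  have hy : algebraMap F K y = 0 := by
    have : 2 * algebraMap F K y * sd = 0 := by linear_combination -hc
    simpa [h2, hsd] using this
  exact ⟨x, by rw [hy, zero_mul, add_zero]⟩

/-- `X false` stands for `z` and `X true` for `τ(z)`. -/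
noncomputable def valuedGenPolys (τ : K →ₐ[F] K) : Subalgebra F (MvPolynomial Bool K) :=
  ⨅ a : K, (⊥ : Subalgebra F K).comap ((aeval fun b ↦ if b then τ a else a).restrictScalars F)

theorem mem_valuedGenPolys {τ : K →ₐ[F] K} {g : MvPolynomial Bool K} :
    g ∈ valuedGenPolys τ ↔
      ∀ a : K, eval (fun b ↦ if b then τ a else a) g ∈ (algebraMap F K).range := by
  simp [valuedGenPolys, Algebra.mem_iInf, Algebra.mem_bot]

theorem adjoin_le_valuedGenPolys {τ : K →ₐ[F] K} {sd : K} {d : F}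
    (hsd : sd ^ 2 = algebraMap F K d)
    (hgen : ∀ c : K, ∃ x y : F, c = algebraMap F K x + algebraMap F K y * sd)
    (hτ : τ sd = -sd) :
    Algebra.adjoin F {X false + X true, C sd * (X false - X true)} ≤ valuedGenPolys τ := by
  refine Algebra.adjoin_le ?_
  rintro _ (rfl | rfl) <;> rw [SetLike.mem_coe, mem_valuedGenPolys] <;> intro a <;>
    obtain ⟨x, y, rfl⟩ := hgen a <;> rw [apply_add_mul_eq_sub_mul hτ]
  · refine ⟨2 * x, ?_⟩
    simp only [map_mul, map_ofNat, map_add, eval_X, Bool.false_eq_true, ↓reduceIte]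
    ring
  · refine ⟨2 * d * y, ?_⟩
    simp only [map_mul, map_ofNat, ← hsd, eval_C, map_sub, eval_X, Bool.false_eq_true,
      ↓reduceIte]
    ring

/-- Reads `X false, X true` as the coordinates `x, y` of `z = x + y * sd`. -/
noncomputable def toCoords (sd : K) : MvPolynomial Bool K →ₐ[K] MvPolynomial Bool K :=
  aeval fun b ↦ if b then X false - C sd * X true else X false + C sd * X true

noncomputable def ofCoords (sd : K) : MvPolynomial Bool K →ₐ[K] MvPolynomial Bool K :=
  aeval fun b ↦ if b then C (2 * sd)⁻¹ * (X false - X true) else C 2⁻¹ * (X false + X true)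

theorem ofCoords_toCoords {sd : K} (h2 : (2 : K) ≠ 0) (hsd : sd ≠ 0) (p : MvPolynomial Bool K) :
    ofCoords sd (toCoords sd p) = p := by
  suffices (ofCoords sd).comp (toCoords sd) = AlgHom.id K _ from congr($this p)
  have hhalf : (C 2⁻¹ : MvPolynomial Bool K) * 2 = 1 := by
    rw [← map_ofNat C 2, ← C_mul, inv_mul_cancel₀ h2, C_1]
  have hCsd : (C sd : MvPolynomial Bool K) * C (2 * sd)⁻¹ = C 2⁻¹ := by
    rw [← C_mul]
    congr 1
    field_simp
  refine algHom_ext fun b ↦ ?_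
  cases b
  all_goals
    simp only [ofCoords, toCoords, AlgHom.comp_apply, aeval_X, Bool.false_eq_true, ↓reduceIte,
      map_add, map_sub, map_mul, aeval_C, algebraMap_eq, AlgHom.coe_id, id_eq]
  · linear_combination (X false - X true) * hCsd + X false * hhalf
  · linear_combination -(X false - X true) * hCsd + X true * hhalf

theorem eval_toCoords (sd x y : K) (p : MvPolynomial Bool K) :
    eval (fun b ↦ if b then y else x) (toCoords sd p) =
      eval (fun b ↦ if b then x - y * sd else x + y * sd) p := by
  show aeval _ (aeval _ p) = aeval _ p
  rw [comp_aeval_apply]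
  congr 1
  ext b
  cases b <;> simp [mul_comm]

theorem toCoords_mem_range_map [Infinite F] {τ : K →ₐ[F] K} {sd : K}
    (hgen : ∀ c : K, ∃ x y : F, c = algebraMap F K x + algebraMap F K y * sd)
    (hτ : τ sd = -sd) (h2 : (2 : K) ≠ 0) (hsd : sd ≠ 0) {g : MvPolynomial Bool K}
    (hg : g ∈ valuedGenPolys τ) :
    toCoords sd g ∈ Set.range (map (algebraMap F K)) := by
  have hfix : map (τ : K →+* K) (toCoords sd g) = toCoords sd g := by
    refine map_eq_self_of_eval_mem_range τ fun x ↦ ?_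
    have hx : algebraMap F K ∘ x =
        fun b ↦ if b then algebraMap F K (x true) else algebraMap F K (x false) := by
      ext b
      cases b <;> rfl
    rw [hx, eval_toCoords, ← apply_add_mul_eq_sub_mul hτ]
    exact mem_valuedGenPolys.mp hg _
  rw [mem_range_map_iff_coeffs_subset]
  intro c hc
  obtain ⟨m, -, rfl⟩ := mem_coeffs_iff.mp hc
  exact mem_range_algebraMap_of_apply_eq_self hgen hτ h2 hsd
    ((coeff_map _ _ m).symm.trans congr(coeff m $hfix))

theorem ofCoords_map_mem_adjoin {sd : K} {d : F} (hsd : sd ^ 2 = algebraMap F K d)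
    (P : MvPolynomial Bool F) :
    ofCoords sd (map (algebraMap F K) P) ∈
      Algebra.adjoin F {X false + X true, C sd * (X false - X true)} := by
  rw [ofCoords, aeval_map_algebraMap]
  refine Algebra.adjoin_le ?_ ((Algebra.adjoin_range_eq_range_aeval F _).ge ⟨P, rfl⟩)
  rintro _ ⟨b, rfl⟩
  have hC : ∀ r : F, (C (algebraMap F K r) : MvPolynomial Bool K) = algebraMap F _ r :=
    fun r ↦ (MvPolynomial.algebraMap_apply r).symm
  cases b
  · simp only [Bool.false_eq_true, ↓reduceIte]
    rw [← map_ofNat (algebraMap F K) 2, ← map_inv₀, hC]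
    exact mul_mem (Subalgebra.algebraMap_mem _ _) (Algebra.subset_adjoin (by simp))
  · have h : (2 * sd)⁻¹ = algebraMap F K (2 * d)⁻¹ * sd := by
      rcases eq_or_ne sd 0 with rfl | h
      · simp
      · rw [map_inv₀, map_mul, map_ofNat, ← hsd]
        field_simp
    simp only [↓reduceIte]
    rw [h, C_mul, hC, mul_assoc]
    exact mul_mem (Subalgebra.algebraMap_mem _ _) (Algebra.subset_adjoin (by simp))

theorem valuedGenPolys_eq_adjoin [Infinite F] {τ : K →ₐ[F] K} {sd : K} {d : F}
    (hsd : sd ^ 2 = algebraMap F K d)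
    (hgen : ∀ c : K, ∃ x y : F, c = algebraMap F K x + algebraMap F K y * sd)
    (hτ : τ sd = -sd) (h2 : (2 : K) ≠ 0) (hsd0 : sd ≠ 0) :
    valuedGenPolys τ = Algebra.adjoin F {X false + X true, C sd * (X false - X true)} := by
  refine le_antisymm (fun g hg ↦ ?_) (adjoin_le_valuedGenPolys hsd hgen hτ)
  obtain ⟨P, hP⟩ := toCoords_mem_range_map hgen hτ h2 hsd0 hg
  rw [← ofCoords_toCoords h2 hsd0 g, ← hP]
  exact ofCoords_map_mem_adjoin hsd P

end GeneralizedPolynomials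

theorem stmt_2_general (D : ℤ) (hD0 : D ≠ 0)
    (K : Type*) [Field K] [Algebra ℚ K] (sd : K) (hsd : sd ^ 2 = (D : K))
    (hgen : ∀ x : K, ∃ a b : ℚ, x = algebraMap ℚ K a + algebraMap ℚ K b * sd)
    (τ : K →ₐ[ℚ] K) (hτ : τ sd = -sd) :
    ∀ g : MvPolynomial Bool K,
      (∀ a : K,
        MvPolynomial.eval (fun b => if b then τ a else a) g ∈ (algebraMap ℚ K).range)
      ↔ g ∈ Algebra.adjoin ℚ
          ({MvPolynomial.X false + MvPolynomial.X true,
            MvPolynomial.C sd * (MvPolynomial.X false - MvPolynomial.X true)} :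
            Set (MvPolynomial Bool K)) := by
  intro g
  have : CharZero K := charZero_of_injective_algebraMap (algebraMap ℚ K).injective
  have hsdQ : sd ^ 2 = algebraMap ℚ K D := by rw [hsd, map_intCast]
  have hsd0 : sd ≠ 0 := by
    rintro rfl
    exact hD0 (by simpa using hsd.symm)
  rw [← valuedGenPolys_eq_adjoin hsdQ hgen hτ two_ne_zero hsd0, mem_valuedGenPolys]

/-- The ring of ℚ-valued generalized polynomials in one variable over K = ℚ(√D)
(polynomials in z and τ(z)) equals ℚ[z + τ(z), √D·(z − τ(z))]. -/
theorem stmt_2 (D : ℤ) (hsq : Squarefree D) (hD0 : D ≠ 0) (hD1 : D ≠ 1)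
    (K : Type*) [Field K] [Algebra ℚ K] (sd : K) (hsd : sd ^ 2 = (D : K))
    (hgen : ∀ x : K, ∃ a b : ℚ, x = algebraMap ℚ K a + algebraMap ℚ K b * sd)
    (τ : K →ₐ[ℚ] K) (hτ : τ sd = -sd) :
    ∀ g : MvPolynomial Bool K,
      (∀ a : K,
        MvPolynomial.eval (fun b => if b then τ a else a) g ∈ (algebraMap ℚ K).range)
      ↔ g ∈ Algebra.adjoin ℚ
          ({MvPolynomial.X false + MvPolynomial.X true,
            MvPolynomial.C sd * (MvPolynomial.X false - MvPolynomial.X true)} :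
            Set (MvPolynomial Bool K)) :=
  stmt_2_general D hD0 K sd hsd hgen τ hτ
end

section
/- Let K = Q(√D) with D squarefree, D ∉ {0,1}, and n ≥ 1. The ring Γ_K^n of generalized polynomials in n variables over K taking values in Q equals Q[z₁ + τ(z₁), √D(z₁ − τ(z₁)), ..., zₙ + τ(zₙ), √D(zₙ − τ(zₙ))]. -/
/-!
Write `K = ℚ ⊕ ℚ√D`. Substituting `zᵢ + τ(zᵢ)` and `√D (zᵢ − τ(zᵢ))` for the variables is an
invertible linear change of variables over `K`, so every `g` is `h(z + τz, √D (z − τz))` for some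
`h` over `K`, and `h = h₀ + √D h₁` with `h₀`, `h₁` over `ℚ`. At `z = a` the new coordinates are
`(2p, 2qD)` for `aᵢ = p + q√D`, so they sweep out all of `ℚ²ⁿ`; as `√D ∉ ℚ`, `g` is `ℚ`-valued
iff `h₁` vanishes on `ℚ²ⁿ`, i.e. iff `h₁ = 0`.
-/

open MvPolynomial

theorem Squarefree.not_isSquare_intCast {D : ℤ} (hsq : Squarefree D) (hD1 : D ≠ 1) :
    ¬IsSquare (D : ℚ) := by
  rw [Rat.isSquare_intCast_iff]
  rintro ⟨r, rfl⟩
  rcases Int.isUnit_iff.mp (hsq r dvd_rfl) with rfl | rfl <;> simp at hD1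

theorem Squarefree.notMem_range_algebraMap_of_sq_eq {K : Type*} [Field K] [Algebra ℚ K] {D : ℤ}
    (hsq : Squarefree D) (hD1 : D ≠ 1) {sd : K} (hsd : sd ^ 2 = (D : K)) :
    sd ∉ (algebraMap ℚ K).range := by
  rintro ⟨q, rfl⟩
  refine hsq.not_isSquare_intCast hD1 ⟨q, (algebraMap ℚ K).injective ?_⟩
  rw [map_intCast, map_mul, ← sq, hsd]

section

variable {R K : Type*} [Field R] [CommRing K] [Algebra R K] {s : K}

theorem eq_zero_of_add_mul_mem_range (hs : s ∉ (algebraMap R K).range) {a b : R}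
    (h : algebraMap R K a + algebraMap R K b * s ∈ (algebraMap R K).range) : b = 0 := by
  obtain ⟨c, hc⟩ := h
  by_contra hb
  refine hs ⟨b⁻¹ * (c - a), ?_⟩
  rw [map_mul, map_sub, hc, add_sub_cancel_left, ← mul_assoc, ← map_mul, inv_mul_cancel₀ hb,
    map_one, one_mul]

theorem MvPolynomial.exists_eq_map_add_C_mul_map {σ : Type*}
    (hgen : ∀ x : K, ∃ a b : R, x = algebraMap R K a + algebraMap R K b * s)
    (h : MvPolynomial σ K) :
    ∃ h₀ h₁ : MvPolynomial σ R,
      h = map (algebraMap R K) h₀ + C s * map (algebraMap R K) h₁ := by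
  induction h using MvPolynomial.induction_on with
  | C c =>
    obtain ⟨a, b, rfl⟩ := hgen c
    exact ⟨C a, C b, by simp only [map_C, C_add, C_mul]; ring⟩
  | add p q hp hq =>
    obtain ⟨p₀, p₁, rfl⟩ := hp
    obtain ⟨q₀, q₁, rfl⟩ := hq
    exact ⟨p₀ + q₀, p₁ + q₁, by simp only [map_add]; ring⟩
  | mul_X p j hp =>
    obtain ⟨p₀, p₁, rfl⟩ := hp
    exact ⟨p₀ * X j, p₁ * X j, by simp only [map_mul, map_X]; ring⟩

theorem MvPolynomial.eval_algebraMap_comp_map {σ : Type*} (r : σ → R) (p : MvPolynomial σ R) :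
    eval (algebraMap R K ∘ r) (map (algebraMap R K) p) = algebraMap R K (eval r p) := by
  rw [eval_map, eval₂_comp]

theorem MvPolynomial.eval_aeval {σ ι : Type*} (x : ι → K) (F : σ → MvPolynomial ι K)
    (p : MvPolynomial σ K) : eval x (aeval F p) = eval (fun v => eval x (F v)) p := by
  rw [aeval_eq_bind₁]
  exact eval₂Hom_bind₁ _ _ _ _

theorem MvPolynomial.exists_eq_map_of_forall_eval_mem_range [Infinite R] {σ : Type*}
    (hs : s ∉ (algebraMap R K).range)
    (hgen : ∀ x : K, ∃ a b : R, x = algebraMap R K a + algebraMap R K b * s)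
    {h : MvPolynomial σ K}
    (hh : ∀ r : σ → R, eval (algebraMap R K ∘ r) h ∈ (algebraMap R K).range) :
    ∃ h₀ : MvPolynomial σ R, h = map (algebraMap R K) h₀ := by
  obtain ⟨h₀, h₁, rfl⟩ := exists_eq_map_add_C_mul_map hgen h
  have h₁_eq : h₁ = 0 := MvPolynomial.funext fun r => by
    rw [map_zero]
    refine eq_zero_of_add_mul_mem_range hs (a := eval r h₀) ?_
    simpa only [map_add, map_mul, eval_C, eval_algebraMap_comp_map, mul_comm s] using hh r
  exact ⟨h₀, by rw [h₁_eq, map_zero, mul_zero, add_zero]⟩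

theorem MvPolynomial.eval_aeval_of_eval_eq_algebraMap {σ ι : Type*}
    {F : σ → MvPolynomial ι K} {x : ι → K} {r : σ → R}
    (hr : ∀ v, eval x (F v) = algebraMap R K (r v)) (w : MvPolynomial σ R) :
    eval x (aeval F w) = algebraMap R K (eval r w) := by
  rw [← aeval_map_algebraMap K, eval_aeval, _root_.funext hr]
  exact eval_algebraMap_comp_map r w

end

section

/-- `(i, false)` stands for `zᵢ` and `(i, true)` for `τ(zᵢ)`. -/
noncomputable def conjGen {R ι : Type*} [CommRing R] (s : R) (v : ι × Bool) :
    MvPolynomial (ι × Bool) R :=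
  if v.2 then C s * (X (v.1, false) - X (v.1, true)) else X (v.1, false) + X (v.1, true)

theorem setOf_eq_range_conjGen {R ι : Type*} [CommRing R] (s : R) :
    {p : MvPolynomial (ι × Bool) R | ∃ i : ι,
      p = X (i, false) + X (i, true) ∨ p = C s * (X (i, false) - X (i, true))} =
      Set.range (conjGen s) := by
  ext p
  constructor
  · rintro ⟨i, rfl | rfl⟩
    exacts [⟨(i, false), rfl⟩, ⟨(i, true), rfl⟩]
  · rintro ⟨⟨i, _ | _⟩, rfl⟩
    exacts [⟨i, Or.inl rfl⟩, ⟨i, Or.inr rfl⟩]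

theorem aeval_conjGen_surjective {K ι : Type*} [Field K] [CharZero K] {s : K} (hs : s ≠ 0) :
    Function.Surjective (aeval (conjGen s) : MvPolynomial (ι × Bool) K →ₐ[K] _) := by
  rw [← AlgHom.range_eq_top, eq_top_iff, ← adjoin_range_X, Algebra.adjoin_le_iff]
  rintro _ ⟨⟨i, b⟩, rfl⟩
  rw [SetLike.mem_coe]
  have hsum : X (i, false) + X (i, true) ∈ (aeval (conjGen s)).range :=
    ⟨(X (i, false) : MvPolynomial (ι × Bool) K), by simp [conjGen]⟩
  have hdiff : X (i, false) - X (i, true) ∈ (aeval (conjGen s)).range :=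
    ⟨(C s⁻¹ * X (i, true) : MvPolynomial (ι × Bool) K), by
      simp [conjGen, ← mul_assoc, ← C_mul, hs]⟩
  cases b
  · convert Subalgebra.smul_mem (aeval (conjGen s)).range (add_mem hsum hdiff) (2⁻¹ : K) using 1
    module
  · convert Subalgebra.smul_mem (aeval (conjGen s)).range (sub_mem hsum hdiff) (2⁻¹ : K) using 1
    module

def conjPoint {K ι : Type*} (τ : K → K) (a : ι → K) (v : ι × Bool) : K :=
  if v.2 then τ (a v.1) else a v.1

variable {K ι : Type*} [Field K]

@[simp]
theorem eval_conjPoint_conjGen_false (τ : K → K) (s : K) (a : ι → K) (i : ι) :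
    eval (conjPoint τ a) (conjGen s (i, false)) = a i + τ (a i) := by
  simp [conjGen, conjPoint]

@[simp]
theorem eval_conjPoint_conjGen_true (τ : K → K) (s : K) (a : ι → K) (i : ι) :
    eval (conjPoint τ a) (conjGen s (i, true)) = s * (a i - τ (a i)) := by
  simp [conjGen, conjPoint]

variable [Algebra ℚ K] {D : ℤ} {sd : K} {τ : K →ₐ[ℚ] K}

theorem conj_algebraMap_add_mul (hτ : τ sd = -sd) (p q : ℚ) :
    τ (algebraMap ℚ K p + algebraMap ℚ K q * sd) = algebraMap ℚ K p - algebraMap ℚ K q * sd := by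
  rw [map_add, map_mul, hτ, AlgHom.commutes, AlgHom.commutes, mul_neg, sub_eq_add_neg]

theorem add_conj_algebraMap_add_mul (hτ : τ sd = -sd) (p q : ℚ) :
    (algebraMap ℚ K p + algebraMap ℚ K q * sd) + τ (algebraMap ℚ K p + algebraMap ℚ K q * sd) =
      algebraMap ℚ K (2 * p) := by
  rw [conj_algebraMap_add_mul hτ, map_mul, map_ofNat]
  ring

theorem mul_sub_conj_algebraMap_add_mul (hsd : sd ^ 2 = (D : K)) (hτ : τ sd = -sd) (p q : ℚ) :
    sd * ((algebraMap ℚ K p + algebraMap ℚ K q * sd) -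
      τ (algebraMap ℚ K p + algebraMap ℚ K q * sd)) = algebraMap ℚ K (2 * q * D) := by
  rw [conj_algebraMap_add_mul hτ, map_mul, map_mul, map_ofNat, map_intCast]
  linear_combination (2 * algebraMap ℚ K q) * hsd

theorem exists_eval_conjGen_eq_algebraMap (hsd : sd ^ 2 = (D : K)) (hτ : τ sd = -sd)
    (hgen : ∀ x : K, ∃ a b : ℚ, x = algebraMap ℚ K a + algebraMap ℚ K b * sd) (a : ι → K) :
    ∃ r : ι × Bool → ℚ, ∀ v, eval (conjPoint τ a) (conjGen sd v) = algebraMap ℚ K (r v) := by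
  choose p q hpq using fun i => hgen (a i)
  refine ⟨fun v => if v.2 then 2 * q v.1 * D else 2 * p v.1, ?_⟩
  rintro ⟨i, _ | _⟩
  · rw [eval_conjPoint_conjGen_false, hpq]
    exact add_conj_algebraMap_add_mul hτ (p i) (q i)
  · rw [eval_conjPoint_conjGen_true, hpq]
    exact mul_sub_conj_algebraMap_add_mul hsd hτ (p i) (q i)

theorem exists_conjPoint_eval_conjGen_eq_algebraMap (hsd : sd ^ 2 = (D : K)) (hτ : τ sd = -sd)
    (hD : D ≠ 0) (r : ι × Bool → ℚ) :
    ∃ a : ι → K, ∀ v, eval (conjPoint τ a) (conjGen sd v) = algebraMap ℚ K (r v) := by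
  refine ⟨fun i => algebraMap ℚ K (r (i, false) / 2) + algebraMap ℚ K (r (i, true) / (2 * D)) * sd,
    ?_⟩
  rintro ⟨i, _ | _⟩
  · rw [eval_conjPoint_conjGen_false, add_conj_algebraMap_add_mul hτ]
    congr 1
    ring
  · rw [eval_conjPoint_conjGen_true, mul_sub_conj_algebraMap_add_mul hsd hτ]
    congr 1
    field_simp

end

theorem stmt_3_general (D : ℤ) (hsq : Squarefree D) (hD1 : D ≠ 1)
    (K : Type*) [Field K] [Algebra ℚ K] (sd : K) (hsd : sd ^ 2 = (D : K))
    (hgen : ∀ x : K, ∃ a b : ℚ, x = algebraMap ℚ K a + algebraMap ℚ K b * sd)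
    (τ : K →ₐ[ℚ] K) (hτ : τ sd = -sd)
    (n : ℕ) :
    ∀ g : MvPolynomial (Fin n × Bool) K,
      (∀ a : Fin n → K,
        MvPolynomial.eval (fun p => if p.2 then τ (a p.1) else a p.1) g
          ∈ (algebraMap ℚ K).range)
      ↔ g ∈ Algebra.adjoin ℚ
          {p : MvPolynomial (Fin n × Bool) K | ∃ i : Fin n,
            p = MvPolynomial.X (i, false) + MvPolynomial.X (i, true) ∨
            p = MvPolynomial.C sd *
              (MvPolynomial.X (i, false) - MvPolynomial.X (i, true))} := by
  intro g
  have : CharZero K := charZero_of_injective_algebraMap (algebraMap ℚ K).injective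
  have hsd_irrat := hsq.notMem_range_algebraMap_of_sq_eq hD1 hsd
  have hsd0 : sd ≠ 0 := fun h => hsd_irrat ⟨0, by rw [map_zero, h]⟩
  rw [setOf_eq_range_conjGen, Algebra.adjoin_range_eq_range_aeval, AlgHom.mem_range]
  constructor
  · intro hg
    obtain ⟨h, rfl⟩ := aeval_conjGen_surjective hsd0 g
    obtain ⟨h₀, rfl⟩ := exists_eq_map_of_forall_eval_mem_range hsd_irrat hgen fun r => by
      obtain ⟨a, ha⟩ := exists_conjPoint_eval_conjGen_eq_algebraMap hsd hτ hsq.ne_zero r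
      have hpoint :
          eval (algebraMap ℚ K ∘ r) h = eval (conjPoint τ a) (aeval (conjGen sd) h) := by
        rw [eval_aeval, _root_.funext ha]
        rfl
      rw [hpoint]
      exact hg a
    exact ⟨h₀, (aeval_map_algebraMap K _ h₀).symm⟩
  · rintro ⟨w, rfl⟩ a
    obtain ⟨r, hr⟩ := exists_eval_conjGen_eq_algebraMap hsd hτ hgen a
    exact ⟨eval r w, (eval_aeval_of_eval_eq_algebraMap hr w).symm⟩

/-- The ring Γ_K^n of ℚ-valued generalized polynomials in n variables over K = ℚ(√D)
equals ℚ[z₁+τ(z₁), √D(z₁−τ(z₁)), ..., zₙ+τ(zₙ), √D(zₙ−τ(zₙ))]. -/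
theorem stmt_3 (D : ℤ) (hsq : Squarefree D) (hD0 : D ≠ 0) (hD1 : D ≠ 1)
    (K : Type*) [Field K] [Algebra ℚ K] (sd : K) (hsd : sd ^ 2 = (D : K))
    (hgen : ∀ x : K, ∃ a b : ℚ, x = algebraMap ℚ K a + algebraMap ℚ K b * sd)
    (τ : K →ₐ[ℚ] K) (hτ : τ sd = -sd)
    (n : ℕ) (hn : 1 ≤ n) :
    ∀ g : MvPolynomial (Fin n × Bool) K,
      (∀ a : Fin n → K,
        MvPolynomial.eval (fun p => if p.2 then τ (a p.1) else a p.1) g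
          ∈ (algebraMap ℚ K).range)
      ↔ g ∈ Algebra.adjoin ℚ
          {p : MvPolynomial (Fin n × Bool) K | ∃ i : Fin n,
            p = MvPolynomial.X (i, false) + MvPolynomial.X (i, true) ∨
            p = MvPolynomial.C sd *
              (MvPolynomial.X (i, false) - MvPolynomial.X (i, true))} :=
  stmt_3_general D hsq hD1 K sd hsd hgen τ hτ n
end

section
/- Let K = Q(√D) with D squarefree, D ∉ {0,1}, G a generalized quadratic form in n variables over K with matrix M_G, Q the quadratic form in 2n variables obtained from G by writing each variable in the integral basis (1, ω_D), and M_Q the matrix of Q. Then det(M_Q) = Dⁿ·det(2M_G) if D ≡ 2, 3 (mod 4), and det(M_Q) = Dⁿ·det(M_G) if D ≡ 1 (mod 4). -/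
open Matrix

/-- det(M_Q) = Dⁿ·det(2M_G) when D ≡ 2,3 (mod 4), and det(M_Q) = Dⁿ·det(M_G) when
D ≡ 1 (mod 4), where M_Q = Tᵀ M_G T is the matrix of the quadratic form associated to a
generalized quadratic form in n variables with matrix M_G over K = ℚ(√D). -/
theorem stmt_5 (D : ℤ) (hsq : Squarefree D) (hD0 : D ≠ 0) (hD1 : D ≠ 1)
    (K : Type*) [Field K] [Algebra ℚ K] (sd : K) (hsd : sd ^ 2 = (D : K))
    (hgen : ∀ x : K, ∃ a b : ℚ, x = algebraMap ℚ K a + algebraMap ℚ K b * sd)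
    (τ : K →ₐ[ℚ] K) (hτ : τ sd = -sd)
    (n : ℕ) (A B C : Matrix (Fin n) (Fin n) K) (hA : A.IsSymm) (hC : C.IsSymm)
    (ω : K) (hω : ω = if D % 4 = 1 then (1 + sd) / 2 else sd)
    (MG T MQ : Matrix (Fin n ⊕ Fin n) (Fin n ⊕ Fin n) K)
    (hMG : MG = Matrix.fromBlocks A B Bᵀ C)
    (hT : T = Matrix.fromBlocks 1 (ω • (1 : Matrix (Fin n) (Fin n) K))
                1 (τ ω • (1 : Matrix (Fin n) (Fin n) K)))
    (hMQ : MQ = Tᵀ * MG * T) :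
    (D % 4 = 2 ∨ D % 4 = 3 → MQ.det = (D : K) ^ n * ((2 : K) • MG).det) ∧
    (D % 4 = 1 → MQ.det = (D : K) ^ n * MG.det) := by
  have hTdet : T.det = (τ ω - ω) ^ n := by
    rw [hT, det_fromBlocks_one₁₁, Matrix.one_mul, ← sub_smul, det_smul, det_one, mul_one,
      Fintype.card_fin]
  have hMQdet : MQ.det = ((τ ω - ω) ^ 2) ^ n * MG.det := by
    rw [hMQ, det_mul, det_mul, det_transpose, hTdet, ← pow_mul, two_mul, pow_add]
    ring
  have hcard : Fintype.card (Fin n ⊕ Fin n) = n + n := by simp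
  have hdet2 : ((2 : K) • MG).det = (2 : K) ^ (n + n) * MG.det := by
    rw [det_smul, hcard]
  constructor
  · rintro (h | h) <;>
    · have hω' : ω = sd := by rw [hω, if_neg (by omega)]
      rw [hMQdet, hω', hτ, hdet2]
      have : (-sd - sd) ^ 2 = 4 * (D : K) := by rw [← hsd]; ring
      rw [this, mul_pow]
      have h4 : (2 : K) ^ (n + n) = 4 ^ n := by rw [pow_add, ← mul_pow]; norm_num
      rw [h4]; ring
  · intro h
    have hω' : ω = (1 + sd) / 2 := by rw [hω, if_pos h]
    have hτω : τ ω = (1 - sd) / 2 := by rw [hω', map_div₀, map_add, _root_.map_one, hτ, map_ofNat]; ring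
    rw [hMQdet, hτω, hω']
    have hchar : CharZero K := charZero_of_injective_algebraMap (algebraMap ℚ K).injective
    have h2 : (2 : K) ≠ 0 := two_ne_zero
    have hdiff : (1 - sd) / 2 - (1 + sd) / 2 = -sd := by field_simp; ring
    have : ((1 - sd) / 2 - (1 + sd) / 2) ^ 2 = (D : K) := by rw [hdiff, neg_sq, hsd]
    rw [this]
end

section
/- Let K = Q(√D) with D squarefree, D ∉ {0,1}, G a generalized quadratic form in n variables over K, Q the associated quadratic form in 2n variables with matrix M_Q. If D ≡ 2,3 (mod 4) and G is integral, or D ≡ 1 (mod 4) and G is classical, then Dⁿ divides det(M_Q). -/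
open Matrix

lemma det_mem_subalg {ι : Type*} [Fintype ι] [DecidableEq ι] {A : Type*} [CommRing A]
    [Algebra ℤ A] (S : Subalgebra ℤ A) (M : Matrix ι ι A) (h : ∀ i j, M i j ∈ S) :
    M.det ∈ S := by
  rw [Matrix.det_apply]
  exact Subalgebra.sum_mem _ fun σ _ =>
    zsmul_mem (Subalgebra.prod_mem _ fun i _ => h _ _) _

/-- If D ≡ 2,3 (mod 4) and G is integral, or D ≡ 1 (mod 4) and G is classical, then
Dⁿ divides det(M_Q) (in the ring of integers of K), where M_Q is the matrix of the
quadratic form associated to the generalized quadratic form G over K = ℚ(√D). -/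
theorem stmt_6 (D : ℤ) (hsq : Squarefree D) (hD0 : D ≠ 0) (hD1 : D ≠ 1)
    (K : Type*) [Field K] [Algebra ℚ K] (sd : K) (hsd : sd ^ 2 = (D : K))
    (hgen : ∀ x : K, ∃ a b : ℚ, x = algebraMap ℚ K a + algebraMap ℚ K b * sd)
    (τ : K →ₐ[ℚ] K) (hτ : τ sd = -sd)
    (n : ℕ) (A B C : Matrix (Fin n) (Fin n) K) (hA : A.IsSymm) (hC : C.IsSymm)
    (ω : K) (hω : ω = if D % 4 = 1 then (1 + sd) / 2 else sd)
    (MG T MQ : Matrix (Fin n ⊕ Fin n) (Fin n ⊕ Fin n) K)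
    (hMG : MG = Matrix.fromBlocks A B Bᵀ C)
    (hT : T = Matrix.fromBlocks 1 (ω • (1 : Matrix (Fin n) (Fin n) K))
                1 (τ ω • (1 : Matrix (Fin n) (Fin n) K)))
    (hMQ : MQ = Tᵀ * MG * T)
    (hcase :
      -- D ≡ 2,3 (mod 4) and G is integral, or
      ((D % 4 = 2 ∨ D % 4 = 3) ∧
        (∀ i, A i i ∈ integralClosure ℤ K ∧ C i i ∈ integralClosure ℤ K) ∧
        (∀ i j, i ≠ j → 2 * A i j ∈ integralClosure ℤ K ∧
          2 * C i j ∈ integralClosure ℤ K) ∧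
        (∀ i j, 2 * B i j ∈ integralClosure ℤ K)) ∨
      -- D ≡ 1 (mod 4) and G is classical
      (D % 4 = 1 ∧ ∀ i j, A i j ∈ integralClosure ℤ K ∧
        B i j ∈ integralClosure ℤ K ∧ C i j ∈ integralClosure ℤ K)) :
    ∃ c ∈ integralClosure ℤ K, MQ.det = (D : K) ^ n * c := by
  have hdetT : T.det = (τ ω - ω) ^ n := by
    rw [hT, Matrix.det_fromBlocks_one₁₁, Matrix.one_mul, ← sub_smul, Matrix.det_smul,
      Matrix.det_one, Fintype.card_fin, mul_one]
  have hdetMQ : MQ.det = MG.det * ((τ ω - ω) ^ 2) ^ n := by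
    rw [hMQ, Matrix.det_mul, Matrix.det_mul, Matrix.det_transpose, hdetT, ← pow_mul]
    ring
  rcases hcase with ⟨h23, hdiag, hoff, hB⟩ | ⟨h1, hint⟩
  · -- D ≡ 2, 3 (mod 4)
    have h2mem : (2 : K) ∈ integralClosure ℤ K := by
      simpa using Subalgebra.algebraMap_mem (integralClosure ℤ K) (2 : ℤ)
    have hωv : ω = sd := by
      rw [hω, if_neg]; rcases h23 with h | h <;> omega
    have hsq2 : (τ ω - ω) ^ 2 = 4 * (D : K) := by
      rw [hωv, hτ]
      have h4 : (-sd - sd) ^ 2 = 4 * sd ^ 2 := by ring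
      rw [h4, hsd]
    refine ⟨((2 : K) • MG).det, det_mem_subalg _ _ ?_, ?_⟩
    · rintro (i | i) (j | j) <;>
        simp only [Matrix.smul_apply, hMG, Matrix.fromBlocks_apply₁₁,
          Matrix.fromBlocks_apply₁₂, Matrix.fromBlocks_apply₂₁, Matrix.fromBlocks_apply₂₂,
          Matrix.transpose_apply, smul_eq_mul]
      · by_cases hij : i = j
        · subst hij; exact mul_mem h2mem (hdiag i).1
        · exact (hoff i j hij).1
      · exact hB i j
      · exact hB j i
      · by_cases hij : i = j
        · subst hij; exact mul_mem h2mem (hdiag i).2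
        · exact (hoff i j hij).2
    · rw [Matrix.det_smul, hdetMQ, hsq2]
      have hcard : Fintype.card (Fin n ⊕ Fin n) = n + n := by simp
      rw [hcard]
      have h2 : (2 : K) ^ (n + n) = 4 ^ n := by rw [pow_add, ← mul_pow]; norm_num
      rw [h2]; ring
  · -- D ≡ 1 (mod 4)
    have hωv : ω = (1 + sd) / 2 := by rw [hω, if_pos h1]
    have hτω : τ ω = (1 - sd) / 2 := by
      rw [hωv, map_div₀, map_add, _root_.map_one, hτ, map_ofNat]; ring
    have hsq2 : (τ ω - ω) ^ 2 = (D : K) := by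
      rw [hτω, hωv]
      have : CharZero K := charZero_of_injective_algebraMap (algebraMap ℚ K).injective
      have h2ne : (2 : K) ≠ 0 := two_ne_zero
      have h4 : (1 - sd) / 2 - (1 + sd) / 2 = -sd := by
        rw [div_sub_div_same, show (1 : K) - sd - (1 + sd) = 2 * (-sd) by ring,
          mul_div_cancel_left₀ _ (h2ne)]
      rw [h4, neg_sq, hsd]
    refine ⟨MG.det, det_mem_subalg _ _ ?_, ?_⟩
    · rintro (i | i) (j | j) <;>
        simp only [hMG, Matrix.fromBlocks_apply₁₁, Matrix.fromBlocks_apply₁₂,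
          Matrix.fromBlocks_apply₂₁, Matrix.fromBlocks_apply₂₂, Matrix.transpose_apply]
      · exact (hint i j).1
      · exact (hint i j).2.1
      · exact (hint j i).2.1
      · exact (hint i j).2.2
    · rw [hdetMQ, hsq2]; ring
end

section
/- Let K = Q(√D) with D squarefree, D ∉ {0,1}, and let G be an integral Z-valued generalized quadratic form in n variables over K. Then the associated quadratic form Q in 2n variables is integral over Z. Moreover, if D ≡ 2,3 (mod 4) and G is integral, or D ≡ 1 (mod 4) and G is classical, then Q is classical (its Gram matrix has entries in Z). -/
/-!
The entries of `M_Q = Tᵀ M_G T` are the values of the symmetric bilinear form of `G` at the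
columns of `T`, and these columns have the shape `(v, τ v)` with `v` integral. So the diagonal
entries are values of `G`, and by polarization twice any entry is `G(v + w) - G(v) - G(w)`: `Q` is
integral, and in particular all entries of `M_Q` are rational.

If `G` is classical, the entries of `M_Q` are moreover algebraic integers, hence rational integers.
If `D ≡ 2, 3 (mod 4)`, then `ω = √D`, and the entries `q₁ = M_Q(inl k, j)`, `q₂ = M_Q(inr k, j)`
satisfy `q₁ + (q₂ / D) √D = 2 (M_G T)(inl k, j)`, an algebraic integer because `2 M_G` is integral.
As `𝒪_K = ℤ[√D]` in this case, `q₁` and `q₂ / D` are integers.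
-/

open Matrix Polynomial

section Rational

variable {K : Type*} [Field K] [Algebra ℚ K]

theorem exists_int_eq_of_isIntegral_algebraMap {r : ℚ} (h : IsIntegral ℤ (algebraMap ℚ K r)) :
    ∃ m : ℤ, r = m := by
  obtain ⟨m, hm⟩ := IsIntegrallyClosed.isIntegral_iff.mp
    ((isIntegral_algebraMap_iff (algebraMap ℚ K).injective).mp h)
  exact ⟨m, by exact_mod_cast hm.symm⟩

theorem exists_int_eq_of_isIntegral_of_two_mul_eq {x : K} (hx : IsIntegral ℤ x) {m : ℤ}
    (h : 2 * x = m) : ∃ k : ℤ, x = k := by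
  have : CharZero K := charZero_of_injective_algebraMap (algebraMap ℚ K).injective
  have hx' : x = algebraMap ℚ K (m / 2) := by
    rw [map_div₀, map_intCast, map_ofNat, ← h]; ring
  obtain ⟨k, hk⟩ := exists_int_eq_of_isIntegral_algebraMap (hx' ▸ hx)
  exact ⟨k, by rw [hx', hk, map_intCast]⟩

end Rational

theorem exists_int_eq_of_sq_mul_squarefree {D : ℤ} (hD : Squarefree D) {t : ℚ} {k : ℤ}
    (h : t ^ 2 * D = k) : ∃ v : ℤ, t = v := by
  have hnum : t.num ^ 2 * D = k * (t.den : ℤ) ^ 2 := by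
    have hden0 : (t.den : ℚ) ≠ 0 := by exact_mod_cast t.den_ne_zero
    rw [← Rat.num_div_den t] at h
    field_simp at h
    have h' : t.num ^ 2 * D = (t.den : ℤ) ^ 2 * k := by exact_mod_cast h
    rw [h', mul_comm]
  have hcop : IsCoprime ((t.den : ℤ) ^ 2) (t.num ^ 2) :=
    (Int.isCoprime_iff_gcd_eq_one.mpr (by exact t.reduced)).symm.pow
  have hdvd : (t.den : ℤ) * t.den ∣ D := by
    rw [← sq]; exact hcop.dvd_of_dvd_mul_left ⟨k, by rw [hnum]; ring⟩
  have hden : t.den = 1 := by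
    rcases Int.isUnit_iff.mp (hD _ hdvd) with h1 | h1 <;> omega
  exact ⟨t.num, by rw [← Rat.num_div_den t, hden]; simp⟩

theorem two_dvd_of_sq_sub_sq_mul_eq_four_mul {D u v m : ℤ} (hD : D % 4 = 2 ∨ D % 4 = 3)
    (h : u ^ 2 - v ^ 2 * D = 4 * m) : 2 ∣ u ∧ 2 ∣ v := by
  have hmod : (u : ZMod 4) ^ 2 = (v : ZMod 4) ^ 2 * (D : ZMod 4) := by
    rw [← sub_eq_zero]
    exact_mod_cast (ZMod.intCast_zmod_eq_zero_iff_dvd _ 4).mpr ⟨m, h⟩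
  have hDmod : (D : ZMod 4) = 2 ∨ (D : ZMod 4) = 3 := by
    rw [← ZMod.intCast_mod D 4]
    rcases hD with h | h <;> simp [h]
  have key : ∀ x y d : ZMod 4, (d = 2 ∨ d = 3) → x ^ 2 = y ^ 2 * d →
      2 * x = 0 ∧ 2 * y = 0 := by decide
  obtain ⟨hu, hv⟩ := key _ _ _ hDmod hmod
  have hu := (ZMod.intCast_zmod_eq_zero_iff_dvd (2 * u) 4).mp (by exact_mod_cast hu)
  have hv := (ZMod.intCast_zmod_eq_zero_iff_dvd (2 * v) 4).mp (by exact_mod_cast hv)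
  omega

theorem isIntegral_of_sq_eq_intCast {R : Type*} [CommRing R] {x : R} {D : ℤ}
    (hx : x ^ 2 = D) : IsIntegral ℤ x :=
  IsIntegral.of_pow two_pos (hx ▸ isIntegral_intCast D)

section Quadratic

variable {K : Type*} [Field K] [Algebra ℚ K] {D : ℤ} {sd : K}

theorem isIntegral_one_add_div_two_of_sq_eq_intCast (hsd : sd ^ 2 = D) (hD : D % 4 = 1) :
    IsIntegral ℤ ((1 + sd) / 2) := by
  have : CharZero K := charZero_of_injective_algebraMap (algebraMap ℚ K).injective
  obtain ⟨c, rfl⟩ : ∃ c : ℤ, D = 4 * c + 1 := ⟨D / 4, by omega⟩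
  refine ⟨X ^ 2 - X - C c, by monicity!, ?_⟩
  rw [← aeval_def]
  simp only [map_sub, map_pow, aeval_X, eq_intCast, map_intCast]
  push_cast at hsd
  linear_combination hsd / 4

theorem exists_int_eq_of_isIntegral_add_mul (hsd : sd ^ 2 = D) (hsq : Squarefree D)
    (hD : D % 4 = 2 ∨ D % 4 = 3) (τ : K →ₐ[ℚ] K) (hτ : τ sd = -sd) {a b : ℚ}
    (h : IsIntegral ℤ (algebraMap ℚ K a + algebraMap ℚ K b * sd)) :
    (∃ m : ℤ, a = m) ∧ ∃ m : ℤ, b = m := by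
  have hconj : IsIntegral ℤ (algebraMap ℚ K a - algebraMap ℚ K b * sd) := by
    simpa [hτ, sub_eq_add_neg] using h.map (τ.restrictScalars ℤ)
  have htrace : algebraMap ℚ K (2 * a) =
      (algebraMap ℚ K a + algebraMap ℚ K b * sd) + (algebraMap ℚ K a - algebraMap ℚ K b * sd) := by
    rw [map_mul, map_ofNat]; ring
  have hnorm : algebraMap ℚ K (a ^ 2 - b ^ 2 * D) =
      (algebraMap ℚ K a + algebraMap ℚ K b * sd) * (algebraMap ℚ K a - algebraMap ℚ K b * sd) := by
    rw [map_sub, map_mul, map_pow, map_pow, map_intCast]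
    linear_combination algebraMap ℚ K b ^ 2 * hsd
  obtain ⟨u, hu⟩ := exists_int_eq_of_isIntegral_algebraMap (htrace ▸ h.add hconj)
  obtain ⟨N, hN⟩ := exists_int_eq_of_isIntegral_algebraMap (hnorm ▸ h.mul hconj)
  obtain ⟨v, hv⟩ := exists_int_eq_of_sq_mul_squarefree hsq (t := 2 * b) (k := u ^ 2 - 4 * N) <| by
    push_cast
    linear_combination (2 * a + u) * hu - 4 * hN
  obtain ⟨⟨u', rfl⟩, ⟨v', rfl⟩⟩ := two_dvd_of_sq_sub_sq_mul_eq_four_mul hD (m := N) (by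
    have : ((u ^ 2 - v ^ 2 * D : ℤ) : ℚ) = (4 * N : ℤ) := by
      push_cast
      linear_combination (-(u : ℚ) - 2 * a) * hu + D * (v + 2 * b) * hv + 4 * hN
    exact_mod_cast this)
  push_cast at hu hv
  exact ⟨⟨u', by linarith⟩, ⟨v', by linarith⟩⟩

end Quadratic

theorem Matrix.IsSymm.two_mul_dotProduct_mulVec {R ι : Type*} [CommRing R] [Fintype ι]
    {M : Matrix ι ι R} (hM : M.IsSymm) (x y : ι → R) :
    2 * (x ⬝ᵥ M *ᵥ y) = (x + y) ⬝ᵥ M *ᵥ (x + y) - x ⬝ᵥ M *ᵥ x - y ⬝ᵥ M *ᵥ y := by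
  have hyx : y ⬝ᵥ M *ᵥ x = x ⬝ᵥ M *ᵥ y := by
    rw [dotProduct_mulVec, dotProduct_comm, ← mulVec_transpose, hM.eq]
  simp only [mulVec_add, dotProduct_add, add_dotProduct, hyx]
  ring

theorem Matrix.mul_apply_mem {R S m n p : Type*} [NonUnitalNonAssocSemiring R] [SetLike S R]
    [AddSubmonoidClass S R] [MulMemClass S R] {s : S} [Fintype n] {M : Matrix m n R}
    {N : Matrix n p R} (hM : ∀ i j, M i j ∈ s) (hN : ∀ i j, N i j ∈ s) (i : m) (j : p) :
    (M * N) i j ∈ s :=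
  sum_mem fun k _ => mul_mem (hM i k) (hN k j)

theorem Matrix.fromBlocks_apply_mem {R S l m : Type*} [SetLike S R] [Zero R] {s : S}
    {A : Matrix l l R} {B : Matrix l m R} {C : Matrix m l R} {D : Matrix m m R}
    (hA : ∀ i j, A i j ∈ s) (hB : ∀ i j, B i j ∈ s) (hC : ∀ i j, C i j ∈ s)
    (hD : ∀ i j, D i j ∈ s) : ∀ i j, fromBlocks A B C D i j ∈ s := by
  rintro (i | i) (j | j)
  exacts [hA i j, hB i j, hC i j, hD i j]

theorem Matrix.two_mul_apply_mem {R S ι : Type*} [NonAssocSemiring R] [SetLike S R]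
    [AddSubmonoidClass S R] {s : S} {A : Matrix ι ι R} (hdiag : ∀ i, A i i ∈ s)
    (hoff : ∀ i j, i ≠ j → 2 * A i j ∈ s) (i j : ι) : 2 * A i j ∈ s := by
  rcases eq_or_ne i j with rfl | h
  exacts [two_mul (A i i) ▸ add_mem (hdiag i) (hdiag i), hoff i j h]

section SubstMatrix

variable {R ι κ : Type*} [CommRing R] [DecidableEq ι] (ω ω' : R)

/-- The matrix `T` of the substitution `α = x + ω y`, `τ α = x + ω' y`. -/
def substMatrix : Matrix (ι ⊕ ι) (ι ⊕ ι) R := fromBlocks 1 (ω • 1) 1 (ω' • 1)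

variable [Fintype ι] (N : Matrix (ι ⊕ ι) κ R) (k : ι) (j : κ)

theorem transpose_substMatrix_mul_apply_inl :
    ((substMatrix ω ω' : Matrix (ι ⊕ ι) (ι ⊕ ι) R)ᵀ * N) (Sum.inl k) j =
      N (Sum.inl k) j + N (Sum.inr k) j := by
  simp [substMatrix, mul_apply, Fintype.sum_sum_type, one_apply]

theorem transpose_substMatrix_mul_apply_inr :
    ((substMatrix ω ω' : Matrix (ι ⊕ ι) (ι ⊕ ι) R)ᵀ * N) (Sum.inr k) j =
      ω * N (Sum.inl k) j + ω' * N (Sum.inr k) j := by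
  simp [substMatrix, mul_apply, Fintype.sum_sum_type, one_apply]

end SubstMatrix

section GeneralizedQuadraticForm

variable {K ι : Type*} [Field K] [Algebra ℚ K] (τ : K →ₐ[ℚ] K)

def conjPair (v : ι → K) : ι ⊕ ι → K := Sum.elim v fun i => τ (v i)

theorem conjPair_add (v w : ι → K) : conjPair τ (v + w) = conjPair τ v + conjPair τ w := by
  ext (i | i) <;> simp [conjPair]

theorem conjPair_mem_integralClosure {v : ι → K} (hv : ∀ i, v i ∈ integralClosure ℤ K)
    (i : ι ⊕ ι) : conjPair τ v i ∈ integralClosure ℤ K := by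
  rcases i with i | i
  · exact hv i
  · exact (hv i).map (τ.restrictScalars ℤ)

theorem exists_transpose_substMatrix_eq_conjPair [DecidableEq ι] {ω : K}
    (hω : ω ∈ integralClosure ℤ K) (j : ι ⊕ ι) : ∃ v : ι → K, (∀ i, v i ∈ integralClosure ℤ K) ∧
      (substMatrix ω (τ ω) : Matrix (ι ⊕ ι) (ι ⊕ ι) K)ᵀ j = conjPair τ v := by
  have hsingle : ∀ x ∈ integralClosure ℤ K, ∀ l i,
      Pi.single (M := fun _ : ι => K) l x i ∈ integralClosure ℤ K := fun x hx l i => by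
      rcases eq_or_ne i l with rfl | h
      · simpa using hx
      · simp [h]
  rcases j with l | l
  · refine ⟨Pi.single l 1, hsingle 1 (one_mem _) l, ?_⟩
    ext (i | i) <;>
      simp [conjPair, substMatrix, Pi.single_apply, one_apply, eq_comm, apply_ite τ]
  · refine ⟨Pi.single l ω, hsingle ω hω l, ?_⟩
    ext (i | i) <;>
      simp [conjPair, substMatrix, Pi.single_apply, one_apply, eq_comm, apply_ite τ]

theorem exists_int_transpose_mul_mul_apply [Fintype ι] {M : Matrix (ι ⊕ ι) (ι ⊕ ι) K}
    (hM : M.IsSymm)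
    (hZ : ∀ v : ι → K, (∀ i, v i ∈ integralClosure ℤ K) →
      ∃ m : ℤ, conjPair τ v ⬝ᵥ M *ᵥ conjPair τ v = m)
    {T : Matrix (ι ⊕ ι) (ι ⊕ ι) K}
    (hT : ∀ j, ∃ v : ι → K, (∀ i, v i ∈ integralClosure ℤ K) ∧ Tᵀ j = conjPair τ v) :
    (∀ j, ∃ m : ℤ, (Tᵀ * M * T) j j = m) ∧ ∀ i j, ∃ m : ℤ, 2 * (Tᵀ * M * T) i j = m := by
  refine ⟨fun j => ?_, fun i j => ?_⟩
  · obtain ⟨v, hv, hTv⟩ := hT j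
    rw [mul_mul_apply, hTv]
    exact hZ v hv
  · obtain ⟨v, hv, hTv⟩ := hT i
    obtain ⟨w, hw, hTw⟩ := hT j
    obtain ⟨m, hm⟩ := hZ (v + w) fun k => add_mem (hv k) (hw k)
    obtain ⟨mv, hmv⟩ := hZ v hv
    obtain ⟨mw, hmw⟩ := hZ w hw
    refine ⟨m - mv - mw, ?_⟩
    rw [mul_mul_apply, hTv, hTw, hM.two_mul_dotProduct_mulVec,
      ← conjPair_add, hm, hmv, hmw]
    push_cast
    ring

end GeneralizedQuadraticForm

section Ramified

variable {K ι κ : Type*} [Field K] [Algebra ℚ K] [Fintype ι] [DecidableEq ι] {D : ℤ} {sd : K}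

theorem exists_int_transpose_substMatrix_mul_apply (hsd : sd ^ 2 = D) (hsq : Squarefree D)
    (hD : D % 4 = 2 ∨ D % 4 = 3) (τ : K →ₐ[ℚ] K) (hτ : τ sd = -sd)
    {T : Matrix (ι ⊕ ι) (ι ⊕ ι) K} (hT : T = substMatrix sd (-sd)) {N : Matrix (ι ⊕ ι) κ K}
    (hN : ∀ i j, 2 * N i j ∈ integralClosure ℤ K) (hhalf : ∀ i j, ∃ m : ℤ, 2 * (Tᵀ * N) i j = m)
    (i : ι ⊕ ι) (j : κ) : ∃ m : ℤ, (Tᵀ * N) i j = m := by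
  have : CharZero K := charZero_of_injective_algebraMap (algebraMap ℚ K).injective
  have hD0 : (D : K) ≠ 0 := by exact_mod_cast (by omega : D ≠ 0)
  suffices ∀ k, (∃ m : ℤ, (Tᵀ * N) (Sum.inl k) j = m) ∧ ∃ m : ℤ, (Tᵀ * N) (Sum.inr k) j = m by
    rcases i with k | k
    exacts [(this k).1, (this k).2]
  intro k
  obtain ⟨m₁, hm₁⟩ := hhalf (Sum.inl k) j
  obtain ⟨m₂, hm₂⟩ := hhalf (Sum.inr k) j
  rw [hT, transpose_substMatrix_mul_apply_inl] at hm₁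
  rw [hT, transpose_substMatrix_mul_apply_inr] at hm₂
  -- the `inl k` entry plus `sd / D` times the `inr k` entry of `Tᵀ N`
  have hdecomp : 2 * N (Sum.inl k) j =
      algebraMap ℚ K (m₁ / 2) + algebraMap ℚ K (m₂ / (2 * D)) * sd := by
    simp only [map_div₀, map_mul, map_intCast, map_ofNat]
    field_simp
    linear_combination D * hm₁ + sd * hm₂ - 2 * (N (Sum.inl k) j - N (Sum.inr k) j) * hsd
  obtain ⟨⟨a, ha⟩, ⟨b, hb⟩⟩ := exists_int_eq_of_isIntegral_add_mul hsd hsq hD τ hτ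
    (hdecomp ▸ hN _ _)
  rw [hT, transpose_substMatrix_mul_apply_inl, transpose_substMatrix_mul_apply_inr]
  have ha' : (m₁ / 2 : K) = a := by simpa using congrArg (algebraMap ℚ K) ha
  have hb' : (m₂ / (2 * D) : K) = b := by simpa using congrArg (algebraMap ℚ K) hb
  refine ⟨⟨a, by linear_combination hm₁ / 2 + ha'⟩, ⟨D * b, ?_⟩⟩
  rw [Int.cast_mul, ← hb']
  field_simp
  linear_combination hm₂

end Ramified

theorem stmt_7_general (D : ℤ) (hsq : Squarefree D)
    (K : Type*) [Field K] [Algebra ℚ K] (sd : K) (hsd : sd ^ 2 = (D : K))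
    (τ : K →ₐ[ℚ] K) (hτ : τ sd = -sd)
    (n : ℕ) (A B C : Matrix (Fin n) (Fin n) K) (hA : A.IsSymm) (hC : C.IsSymm)
    (ω : K) (hω : ω = if D % 4 = 1 then (1 + sd) / 2 else sd)
    (MG T MQ : Matrix (Fin n ⊕ Fin n) (Fin n ⊕ Fin n) K)
    (hMG : MG = Matrix.fromBlocks A B Bᵀ C)
    (hT : T = Matrix.fromBlocks 1 (ω • (1 : Matrix (Fin n) (Fin n) K))
                1 (τ ω • (1 : Matrix (Fin n) (Fin n) K)))
    (hMQ : MQ = Tᵀ * MG * T)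
    -- G is integral:
    (hdiag : ∀ i, A i i ∈ integralClosure ℤ K ∧ C i i ∈ integralClosure ℤ K)
    (hoff : ∀ i j, i ≠ j → 2 * A i j ∈ integralClosure ℤ K ∧
      2 * C i j ∈ integralClosure ℤ K)
    (hB : ∀ i j, 2 * B i j ∈ integralClosure ℤ K)
    -- G is ℤ-valued:
    (hZval : ∀ v : Fin n → K, (∀ i, v i ∈ integralClosure ℤ K) →
      ∃ m : ℤ, dotProduct (Sum.elim v fun i => τ (v i))
        (MG.mulVec (Sum.elim v fun i => τ (v i))) = (m : K)) :
    -- Q is integral: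
    ((∀ i, ∃ m : ℤ, MQ i i = (m : K)) ∧ (∀ i j, ∃ m : ℤ, 2 * MQ i j = (m : K))) ∧
    -- and Q is classical in the two cases:
    (((D % 4 = 2 ∨ D % 4 = 3) ∨
      (D % 4 = 1 ∧ ∀ i j, A i j ∈ integralClosure ℤ K ∧
        B i j ∈ integralClosure ℤ K ∧ C i j ∈ integralClosure ℤ K)) →
      ∀ i j, ∃ m : ℤ, MQ i j = (m : K)) := by
  replace hT : T = substMatrix (ι := Fin n) ω (τ ω) := hT
  have hωint : ω ∈ integralClosure ℤ K := by
    rw [hω]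
    split_ifs with h
    exacts [isIntegral_one_add_div_two_of_sq_eq_intCast hsd h, isIntegral_of_sq_eq_intCast hsd]
  have hcols := exists_transpose_substMatrix_eq_conjPair (ι := Fin n) τ hωint
  have hTint : ∀ i j, T i j ∈ integralClosure ℤ K := fun i j => by
    obtain ⟨v, hv, hTv⟩ := hcols j
    rw [hT, ← transpose_apply (substMatrix ω (τ ω)), hTv]
    exact conjPair_mem_integralClosure τ hv i
  have hQ := exists_int_transpose_mul_mul_apply τ (hMG ▸ hA.fromBlocks rfl hC) hZval hcols
  rw [← hT, ← hMQ] at hQ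
  refine ⟨hQ, ?_⟩
  rintro (hD | ⟨-, hent⟩)
  · have h2MG : ∀ i j, ((2 : K) • MG) i j ∈ integralClosure ℤ K := by
      rw [hMG, fromBlocks_smul]
      exact fromBlocks_apply_mem (two_mul_apply_mem (hdiag · |>.1) (hoff · · · |>.1)) hB
        (fun i j => hB j i) (two_mul_apply_mem (hdiag · |>.2) (hoff · · · |>.2))
    rw [hω, if_neg (by omega), hτ] at hT
    rw [hMQ, Matrix.mul_assoc] at hQ ⊢
    refine exists_int_transpose_substMatrix_mul_apply hsd hsq hD τ hτ hT (fun i j => ?_) hQ.2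
    have := mul_apply_mem h2MG hTint i j
    rwa [Matrix.smul_mul, Matrix.smul_apply, smul_eq_mul] at this
  · have hMGint : ∀ i j, MG i j ∈ integralClosure ℤ K := hMG ▸ fromBlocks_apply_mem
      (hent · · |>.1) (hent · · |>.2.1) (fun i j => (hent j i).2.1) (hent · · |>.2.2)
    intro i j
    obtain ⟨m, hm⟩ := hQ.2 i j
    refine exists_int_eq_of_isIntegral_of_two_mul_eq ?_ hm
    rw [hMQ]
    exact mul_apply_mem (mul_apply_mem (fun i j => hTint j i) hMGint) hTint i j

/-- If G is an integral ℤ-valued generalized quadratic form in n variables over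
K = ℚ(√D), then the associated quadratic form Q in 2n variables is integral over ℤ
(integer diagonal and even-denominator cross coefficients); moreover, if D ≡ 2,3 (mod 4)
(G integral), or D ≡ 1 (mod 4) and G is classical, then Q is classical (its Gram matrix
M_Q has integer entries). -/
theorem stmt_7 (D : ℤ) (hsq : Squarefree D) (hD0 : D ≠ 0) (hD1 : D ≠ 1)
    (K : Type*) [Field K] [Algebra ℚ K] (sd : K) (hsd : sd ^ 2 = (D : K))
    (hgen : ∀ x : K, ∃ a b : ℚ, x = algebraMap ℚ K a + algebraMap ℚ K b * sd)
    (τ : K →ₐ[ℚ] K) (hτ : τ sd = -sd)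
    (n : ℕ) (A B C : Matrix (Fin n) (Fin n) K) (hA : A.IsSymm) (hC : C.IsSymm)
    (ω : K) (hω : ω = if D % 4 = 1 then (1 + sd) / 2 else sd)
    (MG T MQ : Matrix (Fin n ⊕ Fin n) (Fin n ⊕ Fin n) K)
    (hMG : MG = Matrix.fromBlocks A B Bᵀ C)
    (hT : T = Matrix.fromBlocks 1 (ω • (1 : Matrix (Fin n) (Fin n) K))
                1 (τ ω • (1 : Matrix (Fin n) (Fin n) K)))
    (hMQ : MQ = Tᵀ * MG * T)
    -- G is integral:
    (hdiag : ∀ i, A i i ∈ integralClosure ℤ K ∧ C i i ∈ integralClosure ℤ K)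
    (hoff : ∀ i j, i ≠ j → 2 * A i j ∈ integralClosure ℤ K ∧
      2 * C i j ∈ integralClosure ℤ K)
    (hB : ∀ i j, 2 * B i j ∈ integralClosure ℤ K)
    -- G is ℤ-valued:
    (hZval : ∀ v : Fin n → K, (∀ i, v i ∈ integralClosure ℤ K) →
      ∃ m : ℤ, dotProduct (Sum.elim v fun i => τ (v i))
        (MG.mulVec (Sum.elim v fun i => τ (v i))) = (m : K)) :
    -- Q is integral:
    ((∀ i, ∃ m : ℤ, MQ i i = (m : K)) ∧ (∀ i j, ∃ m : ℤ, 2 * MQ i j = (m : K))) ∧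
    -- and Q is classical in the two cases:
    (((D % 4 = 2 ∨ D % 4 = 3) ∨
      (D % 4 = 1 ∧ ∀ i j, A i j ∈ integralClosure ℤ K ∧
        B i j ∈ integralClosure ℤ K ∧ C i j ∈ integralClosure ℤ K)) →
      ∀ i j, ∃ m : ℤ, MQ i j = (m : K)) :=
  stmt_7_general D hsq K sd hsd τ hτ n A B C hA hC ω hω MG T MQ hMG hT hMQ hdiag hoff hB hZval
end

section
/- Let K = Q(√D) with D squarefree, D ∉ {0,1}, p a prime dividing D, and G an integral Z-valued generalized quadratic form in n variables over K. If Q is the quadratic form in 2n variables associated to G, with Gram matrix M_Q, then the rank of M_Q modulo p is at most n. -/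
/-!
Write `√D = mω + a` with `(m, a) = (2, -1)` if `D ≡ 1 mod 4` and `(1, 0)` otherwise. The
integral change of variables `y ↦ m y`, `x ↦ x + a y` turns `T` into the matrix of
`x + y√D ↦ (x + y√D, x - y√D)`, and it is invertible modulo `p` because `p ∤ m`. In the new
variables the Gram matrix is `[[S, √D F], [√D G, D H]]` with `S = A + B + Bᵀ + C`. Its entries are
integers, so `F = S - 2(B + C)` and `H = S - 2(B + Bᵀ)` have integral entries, and an integer of
the form `√D z` with `z` integral is divisible by `D` (`z² = r² / D` is rational and integral, and
`D` is squarefree); this applies to `√D F` and to `D H = √D (√D H)`. Hence modulo `p` the last `n`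
columns vanish.
-/

open Matrix

section Integrality

variable {K : Type*} [Field K] [CharZero K]

theorem Int.dvd_of_isIntegral_of_intCast_eq_mul {a b : ℤ} (hb : b ≠ 0) {z : K}
    (hz : IsIntegral ℤ z) (h : (a : K) = b * z) : b ∣ a := by
  have hb' : (b : K) ≠ 0 := by exact_mod_cast hb
  obtain ⟨k, hk⟩ := hz.exists_int_iff_exists_rat.mp ⟨a / b, by push_cast; rw [h]; field_simp⟩
  exact ⟨k, by exact_mod_cast (h.trans (by rw [hk]) : (a : K) = b * k)⟩

theorem Int.dvd_of_isIntegral_of_intCast_eq_sqrt_mul {D : ℤ} (hD : Squarefree D) {s : K}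
    (hs : s ^ 2 = D) {z : K} (hz : IsIntegral ℤ z) {r : ℤ} (hr : (r : K) = s * z) : D ∣ r := by
  refine (hD.dvd_pow_iff_dvd two_ne_zero).mp
    (Int.dvd_of_isIntegral_of_intCast_eq_mul hD.ne_zero (hz.pow 2) ?_)
  push_cast
  rw [hr, mul_pow, hs]

end Integrality

namespace Matrix

theorem rank_le_of_apply_inr_eq_zero {R l m k : Type*} [CommRing R] [StrongRankCondition R]
    [Fintype m] [Fintype k] [DecidableEq m] (M : Matrix l (m ⊕ k) R)
    (h : ∀ i j, M i (Sum.inr j) = 0) : M.rank ≤ Fintype.card m := by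
  have hM : M = M.submatrix id Sum.inl * fromCols (1 : Matrix m m R) (0 : Matrix m k R) := by
    ext i (j | j) <;> simp [h]
  calc M.rank = (M.submatrix id Sum.inl * fromCols (1 : Matrix m m R) (0 : Matrix m k R)).rank := by
        rw [← hM]
    _ ≤ (M.submatrix id Sum.inl).rank := rank_mul_le_left _ _
    _ ≤ Fintype.card m := rank_le_card_width _

theorem rank_map_transpose_mul_mul {R S m : Type*} [CommRing R] [CommRing S] [Fintype m]
    [DecidableEq m] (f : R →+* S) (N P : Matrix m m R) (hP : IsUnit (f P.det)) :
    ((Pᵀ * N * P).map f).rank = (N.map f).rank := by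
  have hP' : IsUnit (P.map f).det := by rwa [RingHom.map_det, RingHom.mapMatrix_apply] at hP
  rw [Matrix.map_mul, Matrix.map_mul, transpose_map, rank_mul_eq_left_of_isUnit_det _ _ hP',
    rank_mul_eq_right_of_isUnit_det _ _ (by rwa [det_transpose])]

theorem map_transpose_mul_mul_of_map_eq {R S m : Type*} [CommRing R] [CommRing S] [Fintype m]
    (f : R →+* S) {N : Matrix m m R} {M T : Matrix m m S} (hN : N.map f = Tᵀ * M * T)
    (P : Matrix m m R) : (Pᵀ * N * P).map f = (T * P.map f)ᵀ * M * (T * P.map f) := by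
  rw [Matrix.map_mul, Matrix.map_mul, transpose_map, hN, transpose_mul]
  simp only [Matrix.mul_assoc]

end Matrix

section BlockMatrices

variable {R n : Type*} [CommRing R] [DecidableEq n]

def conjPairMatrix (s : R) : Matrix (n ⊕ n) (n ⊕ n) R := fromBlocks 1 (s • 1) 1 ((-s) • 1)

def shearMatrix (a m : R) : Matrix (n ⊕ n) (n ⊕ n) R := fromBlocks 1 (a • 1) 0 (m • 1)

theorem conjPairMatrix_transpose_mul_fromBlocks_mul_conjPairMatrix [Fintype n] (s : R)
    (A B C : Matrix n n R) :
    (conjPairMatrix s)ᵀ * fromBlocks A B Bᵀ C * conjPairMatrix s =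
      fromBlocks (A + B + Bᵀ + C) (s • (A - B + Bᵀ - C)) (s • (A + B - Bᵀ - C))
        ((s * s) • (A - B - Bᵀ + C)) := by
  simp only [conjPairMatrix, fromBlocks_transpose, fromBlocks_multiply, transpose_one,
    transpose_smul, Matrix.one_mul, Matrix.mul_one, Matrix.smul_mul, Matrix.mul_smul]
  congr 1 <;> module

theorem fromBlocks_mul_shearMatrix [Fintype n] {ω ω' a m s : R} (h : m * ω + a = s)
    (h' : m * ω' + a = -s) :
    fromBlocks 1 (ω • 1) 1 (ω' • 1) * shearMatrix a m =
      (conjPairMatrix s : Matrix (n ⊕ n) (n ⊕ n) R) := by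
  rw [shearMatrix, conjPairMatrix, ← h', ← h]
  simp only [fromBlocks_multiply, Matrix.mul_smul, Matrix.mul_one, Matrix.mul_zero, add_zero]
  congr 1 <;> module

theorem det_shearMatrix [Fintype n] (a m : R) :
    (shearMatrix a m : Matrix (n ⊕ n) (n ⊕ n) R).det = m ^ Fintype.card n := by
  rw [shearMatrix, det_fromBlocks_zero₂₁, det_one, one_mul, det_smul, det_one, mul_one]

theorem map_shearMatrix {S : Type*} [CommRing S] (f : R →+* S) (a m : R) :
    (shearMatrix a m : Matrix (n ⊕ n) (n ⊕ n) R).map f = shearMatrix (f a) (f m) := by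
  rw [shearMatrix, shearMatrix, fromBlocks_map, map_smul' _ _ _ (map_mul f),
    map_smul' _ _ _ (map_mul f), Matrix.map_one _ (map_zero f) (map_one f),
    Matrix.map_zero _ (map_zero f)]

end BlockMatrices

theorem exists_int_mul_add_eq_sqrt {K : Type*} [Field K] [CharZero K] {D : ℤ} {sd ω : K}
    (hω : ω = if D % 4 = 1 then (1 + sd) / 2 else sd) {F : Type*} [FunLike F K K]
    [RingHomClass F K K] (τ : F) (hτ : τ sd = -sd) {p : ℕ} (hp : p.Prime) (hpD : (p : ℤ) ∣ D) :
    ∃ a m : ℤ, IsUnit (m : ZMod p) ∧ m * ω + a = sd ∧ m * τ ω + a = -sd := by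
  split_ifs at hω with hD
  · have hp2 : p ≠ 2 := by
      rintro rfl
      omega
    refine ⟨-1, 2, ?_, ?_, ?_⟩
    · exact_mod_cast (ZMod.isUnit_iff_coprime 2 p).mpr
        ((Nat.coprime_primes Nat.prime_two hp).mpr hp2.symm)
    · rw [hω]; push_cast; field_simp; ring
    · rw [hω, map_div₀, map_add, map_one, map_ofNat, hτ]; push_cast; field_simp; ring
  · exact ⟨0, 1, by simp, by simp [hω], by simp [hω, hτ]⟩

theorem dvd_apply_inr_of_map_eq_fromBlocks {K n : Type*} [Field K] [CharZero K] [Fintype n]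
    {D : ℤ} (hD : Squarefree D) {sd : K} (hsd : sd ^ 2 = D) {A B C G : Matrix n n K}
    (hB : ∀ i j, IsIntegral ℤ (2 * B i j)) (hC : ∀ i j, IsIntegral ℤ (2 * C i j))
    {N : Matrix (n ⊕ n) (n ⊕ n) ℤ}
    (hN : N.map (Int.castRingHom K) = fromBlocks (A + B + Bᵀ + C) (sd • (A - B + Bᵀ - C)) G
      ((sd * sd) • (A - B - Bᵀ + C))) :
    ∀ x j, D ∣ N x (Sum.inr j) := by
  have hentry (x y) : (N x y : K) = fromBlocks (A + B + Bᵀ + C) (sd • (A - B + Bᵀ - C)) G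
      ((sd * sd) • (A - B - Bᵀ + C)) x y := by
    rw [← hN, map_apply, eq_intCast]
  have hsd_int : IsIntegral ℤ sd := IsIntegral.of_pow two_pos (hsd ▸ isIntegral_intCast D)
  rintro (i | i) j
  · refine Int.dvd_of_isIntegral_of_intCast_eq_sqrt_mul hD hsd
      (z := (N (Sum.inl i) (Sum.inl j) : K) - 2 * B i j - 2 * C i j)
      (((isIntegral_intCast _).sub (hB i j)).sub (hC i j)) ?_
    simp only [hentry, fromBlocks_apply₁₁, fromBlocks_apply₁₂, Matrix.add_apply, Matrix.sub_apply,
      Matrix.smul_apply, transpose_apply, smul_eq_mul]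
    ring
  · refine Int.dvd_of_isIntegral_of_intCast_eq_sqrt_mul hD hsd
      (z := sd * ((N (Sum.inl i) (Sum.inl j) : K) - 2 * B i j - 2 * B j i))
      (hsd_int.mul (((isIntegral_intCast _).sub (hB i j)).sub (hB j i))) ?_
    simp only [hentry, fromBlocks_apply₁₁, fromBlocks_apply₂₂, Matrix.add_apply, Matrix.sub_apply,
      Matrix.smul_apply, transpose_apply, smul_eq_mul]
    ring

theorem stmt_8_general (D : ℤ) (hsq : Squarefree D)
    (K : Type*) [Field K] [Algebra ℚ K] (sd : K) (hsd : sd ^ 2 = (D : K))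
    (τ : K →ₐ[ℚ] K) (hτ : τ sd = -sd)
    (p : ℕ) (hp : p.Prime) (hpD : (p : ℤ) ∣ D)
    (n : ℕ) (A B C : Matrix (Fin n) (Fin n) K)
    (ω : K) (hω : ω = if D % 4 = 1 then (1 + sd) / 2 else sd)
    (MG T MQ : Matrix (Fin n ⊕ Fin n) (Fin n ⊕ Fin n) K)
    (hMG : MG = Matrix.fromBlocks A B Bᵀ C)
    (hT : T = Matrix.fromBlocks 1 (ω • (1 : Matrix (Fin n) (Fin n) K))
                1 (τ ω • (1 : Matrix (Fin n) (Fin n) K)))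
    (hMQ : MQ = Tᵀ * MG * T)
    -- G is integral:
    (hdiag : ∀ i, A i i ∈ integralClosure ℤ K ∧ C i i ∈ integralClosure ℤ K)
    (hoff : ∀ i j, i ≠ j → 2 * A i j ∈ integralClosure ℤ K ∧
      2 * C i j ∈ integralClosure ℤ K)
    (hB : ∀ i j, 2 * B i j ∈ integralClosure ℤ K)
    -- N is the integer matrix of entries of M_Q:
    (N : Matrix (Fin n ⊕ Fin n) (Fin n ⊕ Fin n) ℤ)
    (hN : ∀ i j, ((N i j : ℤ) : K) = MQ i j) :
    (N.map (Int.cast : ℤ → ZMod p)).rank ≤ n := by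
  have : CharZero K := algebraRat.charZero K
  have : Fact p.Prime := ⟨hp⟩
  obtain ⟨a, m, hm, hmω, hmτω⟩ := exists_int_mul_add_eq_sqrt hω τ hτ hp hpD
  have h2C (i j) : IsIntegral ℤ (2 * C i j) := by
    rcases eq_or_ne i j with rfl | hij
    · rw [two_mul]
      exact (hdiag i).2.add (hdiag i).2
    · exact (hoff i j hij).2
  have hNK : N.map (Int.castRingHom K) = Tᵀ * MG * T := (Matrix.ext hN).trans hMQ
  have hdvd := dvd_apply_inr_of_map_eq_fromBlocks hsq hsd (A := A) hB h2C
    (N := (shearMatrix a m)ᵀ * N * shearMatrix a m) <| by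
      rw [map_transpose_mul_mul_of_map_eq _ hNK, map_shearMatrix, eq_intCast, eq_intCast, hT,
        fromBlocks_mul_shearMatrix hmω hmτω, hMG,
        conjPairMatrix_transpose_mul_fromBlocks_mul_conjPairMatrix]
  have hdet : IsUnit (Int.castRingHom (ZMod p)
      (shearMatrix a m : Matrix (Fin n ⊕ Fin n) (Fin n ⊕ Fin n) ℤ).det) := by
    simpa [det_shearMatrix] using hm.pow _
  calc (N.map (Int.cast : ℤ → ZMod p)).rank
      = (((shearMatrix a m)ᵀ * N * shearMatrix a m).map (Int.castRingHom (ZMod p))).rank := by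
        rw [rank_map_transpose_mul_mul _ _ _ hdet, Int.coe_castRingHom]
    _ ≤ Fintype.card (Fin n) := rank_le_of_apply_inr_eq_zero _ fun x j =>
        (ZMod.intCast_zmod_eq_zero_iff_dvd _ p).mpr (hpD.trans (hdvd x j))
    _ = n := Fintype.card_fin n

/-- Let p be a prime dividing D and G an integral ℤ-valued generalized quadratic form
in n variables over K = ℚ(√D). If M_Q is the Gram matrix of the associated quadratic
form Q in 2n variables (with integer entries N), then the rank of M_Q modulo p is at
most n. -/
theorem stmt_8 (D : ℤ) (hsq : Squarefree D) (hD0 : D ≠ 0) (hD1 : D ≠ 1)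
    (K : Type*) [Field K] [Algebra ℚ K] (sd : K) (hsd : sd ^ 2 = (D : K))
    (hgen : ∀ x : K, ∃ a b : ℚ, x = algebraMap ℚ K a + algebraMap ℚ K b * sd)
    (τ : K →ₐ[ℚ] K) (hτ : τ sd = -sd)
    (p : ℕ) (hp : p.Prime) (hpD : (p : ℤ) ∣ D)
    (n : ℕ) (A B C : Matrix (Fin n) (Fin n) K) (hA : A.IsSymm) (hC : C.IsSymm)
    (ω : K) (hω : ω = if D % 4 = 1 then (1 + sd) / 2 else sd)
    (MG T MQ : Matrix (Fin n ⊕ Fin n) (Fin n ⊕ Fin n) K)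
    (hMG : MG = Matrix.fromBlocks A B Bᵀ C)
    (hT : T = Matrix.fromBlocks 1 (ω • (1 : Matrix (Fin n) (Fin n) K))
                1 (τ ω • (1 : Matrix (Fin n) (Fin n) K)))
    (hMQ : MQ = Tᵀ * MG * T)
    -- G is integral:
    (hdiag : ∀ i, A i i ∈ integralClosure ℤ K ∧ C i i ∈ integralClosure ℤ K)
    (hoff : ∀ i j, i ≠ j → 2 * A i j ∈ integralClosure ℤ K ∧
      2 * C i j ∈ integralClosure ℤ K)
    (hB : ∀ i j, 2 * B i j ∈ integralClosure ℤ K)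
    -- G is ℤ-valued:
    (hZval : ∀ v : Fin n → K, (∀ i, v i ∈ integralClosure ℤ K) →
      ∃ m : ℤ, dotProduct (Sum.elim v fun i => τ (v i))
        (MG.mulVec (Sum.elim v fun i => τ (v i))) = (m : K))
    -- N is the integer matrix of entries of M_Q:
    (N : Matrix (Fin n ⊕ Fin n) (Fin n ⊕ Fin n) ℤ)
    (hN : ∀ i j, ((N i j : ℤ) : K) = MQ i j) :
    (N.map (Int.cast : ℤ → ZMod p)).rank ≤ n :=
  stmt_8_general D hsq K sd hsd τ hτ p hp hpD n A B C ω hω MG T MQ hMG hT hMQ hdiag hoff hB N hN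
end

section
/- Let D be a squarefree integer and a ∈ Z₂. The quadratic form x² + y² − Dz² − Dw² represents a over the 2-adic integers Z₂. -/
/-!
Write a = 4^k u with 4 ∤ u and rescale a representation of u by 2^k. Since D is squarefree,
4 ∤ D, and a finite check modulo 8 gives y, z, w with u - y² + Dz² + Dw² ≡ 1 (mod 8).
By Hensel's lemma every 2-adic integer ≡ 1 (mod 8) is a square, which supplies x.
-/

namespace PadicInt

open Polynomial in
theorem isSquare_of_norm_sub_one_lt {p : ℕ} [Fact p.Prime] {c : ℤ_[p]}
    (h : ‖c - 1‖ < ‖(2 : ℤ_[p])‖ ^ 2) : IsSquare c := by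
  have hF : (X ^ 2 - C c).eval 1 = 1 - c := by simp
  have hF' : (derivative (X ^ 2 - C c)).eval 1 = 2 := by simp [one_add_one_eq_two]
  obtain ⟨x, hx, -⟩ := hensels_lemma (F := X ^ 2 - C c) (a := 1)
    (by rwa [coe_aeval_eq_eval, hF, hF', norm_sub_rev])
  rw [coe_aeval_eq_eval, eval_sub, eval_pow, eval_X, eval_C, sub_eq_zero] at hx
  exact ⟨x, by rw [← hx, sq]⟩

theorem isSquare_of_eight_dvd_sub_one {c : ℤ_[2]} (h : 8 ∣ c - 1) : IsSquare c := by
  refine isSquare_of_norm_sub_one_lt ?_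
  have h8 : ‖c - 1‖ ≤ ((2 : ℕ) : ℝ) ^ (-(3 : ℕ) : ℤ) := by
    rw [norm_le_pow_iff_mem_span_pow, Ideal.mem_span_singleton]
    exact_mod_cast h
  have h2 : ‖(2 : ℤ_[2])‖ = 2⁻¹ := by exact_mod_cast norm_p (p := 2)
  rw [h2]
  norm_num at h8 ⊢
  linarith

theorem toZModPow_three_eq_zero_iff (x : ℤ_[2]) : toZModPow 3 x = 0 ↔ 8 ∣ x := by
  rw [← RingHom.mem_ker, ker_toZModPow, Ideal.mem_span_singleton]
  norm_num

end PadicInt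

-- In `ZMod 8`, `2 * d ≠ 0` says that `4 ∤ d`; with `d = 3`, `m = 0` there is no solution.
theorem ZMod.exists_sub_sq_add_mul_sq_add_mul_sq_eq_one :
    ∀ d m : ZMod 8, 2 * d ≠ 0 → 2 * m ≠ 0 →
      ∃ y z w : ZMod 8, m - y ^ 2 + d * z ^ 2 + d * w ^ 2 = 1 := by
  decide

namespace PadicInt

theorem two_mul_toZModPow_three_ne_zero {x : ℤ_[2]} (hx : ¬4 ∣ x) : 2 * toZModPow 3 x ≠ 0 := by
  rwa [← map_ofNat (toZModPow 3) 2, ← map_mul, Ne, toZModPow_three_eq_zero_iff,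
    show (8 : ℤ_[2]) = 2 * 4 by norm_num, mul_dvd_mul_iff_left two_ne_zero]

theorem exists_eight_dvd_sub_sq_add_mul_sq_add_mul_sq_sub_one {d m : ℤ_[2]}
    (hd : ¬4 ∣ d) (hm : ¬4 ∣ m) :
    ∃ y z w : ℤ_[2], 8 ∣ m - y ^ 2 + d * z ^ 2 + d * w ^ 2 - 1 := by
  obtain ⟨y, z, w, hyzw⟩ := ZMod.exists_sub_sq_add_mul_sq_add_mul_sq_eq_one _ _
    (two_mul_toZModPow_three_ne_zero hd) (two_mul_toZModPow_three_ne_zero hm)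
  obtain ⟨y, rfl⟩ := ZMod.ringHom_surjective (toZModPow (p := 2) 3) y
  obtain ⟨z, rfl⟩ := ZMod.ringHom_surjective (toZModPow (p := 2) 3) z
  obtain ⟨w, rfl⟩ := ZMod.ringHom_surjective (toZModPow (p := 2) 3) w
  refine ⟨y, z, w, (toZModPow_three_eq_zero_iff _).1 ?_⟩
  simp only [map_sub, map_add, map_mul, map_pow, map_one, hyzw, sub_self]

theorem exists_sq_add_sq_sub_mul_sq_sub_mul_sq_eq {d u : ℤ_[2]} (hd : ¬4 ∣ d) (hu : ¬4 ∣ u) :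
    ∃ x y z w : ℤ_[2], x ^ 2 + y ^ 2 - d * z ^ 2 - d * w ^ 2 = u := by
  obtain ⟨y, z, w, h8⟩ := exists_eight_dvd_sub_sq_add_mul_sq_add_mul_sq_sub_one hd hu
  obtain ⟨x, hx⟩ := isSquare_of_eight_dvd_sub_one h8
  exact ⟨x, y, z, w, by linear_combination -hx⟩

theorem exists_eq_four_pow_mul_not_four_dvd {a : ℤ_[2]} (ha : a ≠ 0) :
    ∃ (k : ℕ) (u : ℤ_[2]), a = 4 ^ k * u ∧ ¬4 ∣ u := by
  have h4 : ¬IsUnit (4 : ℤ_[2]) := by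
    rw [show (4 : ℤ_[2]) = (2 : ℕ) ^ 2 by norm_num, isUnit_pow_iff two_ne_zero]
    exact prime_p.not_isUnit
  obtain ⟨u, hu, h4u⟩ := (FiniteMultiplicity.of_not_isUnit h4 ha).exists_eq_pow_mul_and_not_dvd
  exact ⟨_, u, hu, h4u⟩

theorem not_four_dvd_intCast_of_squarefree {D : ℤ} (hD : Squarefree D) : ¬4 ∣ (D : ℤ_[2]) := by
  intro h
  have h' : ((2 : ℕ) : ℤ_[2]) ^ 2 ∣ (D : ℤ_[2]) := by norm_num [h]
  rw [pow_p_dvd_int_iff] at h'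
  have h2 := hD 2 (by simpa [sq] using h')
  norm_num [Int.isUnit_iff] at h2

end PadicInt

open PadicInt in
/-- For a squarefree integer D and any a ∈ ℤ₂, the quadratic form
x² + y² − Dz² − Dw² represents a over the 2-adic integers. -/
theorem stmt_13 (D : ℤ) (hD : Squarefree D) (a : ℤ_[2]) :
    ∃ x y z w : ℤ_[2],
      x ^ 2 + y ^ 2 - (D : ℤ_[2]) * z ^ 2 - (D : ℤ_[2]) * w ^ 2 = a := by
  rcases eq_or_ne a 0 with rfl | ha
  · exact ⟨0, 0, 0, 0, by ring⟩
  obtain ⟨k, u, rfl, hu⟩ := exists_eq_four_pow_mul_not_four_dvd ha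
  obtain ⟨x, y, z, w, hxyzw⟩ :=
    exists_sq_add_sq_sub_mul_sq_sub_mul_sq_eq (not_four_dvd_intCast_of_squarefree hD) hu
  refine ⟨2 ^ k * x, 2 ^ k * y, 2 ^ k * z, 2 ^ k * w, ?_⟩
  rw [← hxyzw, show (4 : ℤ_[2]) ^ k = (2 ^ k) ^ 2 by rw [← pow_mul, mul_comm, pow_mul]; norm_num]
  ring
end

section
/- Let D be a positive integer. The quadratic form x² + y² − Dz² − Dw² represents 0 non-trivially over Z (i.e., has a nonzero integer solution to x² + y² = D(z² + w²)) if and only if D is a sum of two integer squares. -/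
/-!
If `x² + y² = D (z² + w²)` with `(z, w) ≠ 0`, then for every prime `q ≡ 3 (mod 4)` the
`q`-adic valuation of `D` is the difference of those of `x² + y²` and `z² + w²`, both even by
the two-squares criterion; hence `D` is a sum of two squares.
Conversely, `D = a² + b²` gives the solution `(a, b, 1, 0)`.
-/

theorem Nat.exists_sq_add_sq_of_mul {m n : ℕ} (hn : n ≠ 0) (hmn : ∃ a b, m * n = a ^ 2 + b ^ 2)
    (hn_sq : ∃ c d, n = c ^ 2 + d ^ 2) : ∃ a b, m = a ^ 2 + b ^ 2 := by
  rcases eq_or_ne m 0 with rfl | hm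
  · exact ⟨0, 0, rfl⟩
  rw [Nat.eq_sq_add_sq_iff] at hmn hn_sq ⊢
  intro q hq hq4
  have : Fact q.Prime := ⟨Nat.prime_of_mem_primeFactors hq⟩
  have hmn_even : Even (padicValNat q m + padicValNat q n) := by
    rw [← padicValNat.mul hm hn]
    exact hmn q (Nat.primeFactors_mul hm hn ▸ Finset.mem_union_left _ hq) hq4
  have hn_even : Even (padicValNat q n) := by
    by_cases hqn : q ∣ n
    · exact hn_sq q (Nat.mem_primeFactors.mpr ⟨this.out, hqn, hn⟩) hq4
    · simp [padicValNat.eq_zero_of_not_dvd hqn]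
  exact (Nat.even_add.mp hmn_even).mpr hn_even

theorem Int.exists_sq_add_sq_of_mul {D x y z w : ℤ} (h : x ^ 2 + y ^ 2 = D * (z ^ 2 + w ^ 2))
    (hzw : z ^ 2 + w ^ 2 ≠ 0) : ∃ a b : ℤ, D = a ^ 2 + b ^ 2 := by
  have hD : 0 ≤ D :=
    nonneg_of_mul_nonneg_left (h ▸ by positivity) (lt_of_le_of_ne (by positivity) hzw.symm)
  lift D to ℕ using hD
  have hnat : D * (z.natAbs ^ 2 + w.natAbs ^ 2) = x.natAbs ^ 2 + y.natAbs ^ 2 := by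
    zify
    simp only [sq_abs, h]
  have hzw' : z.natAbs ^ 2 + w.natAbs ^ 2 ≠ 0 := by
    zify
    simpa only [sq_abs] using hzw
  obtain ⟨a, b, hab⟩ := Nat.exists_sq_add_sq_of_mul hzw' ⟨_, _, hnat⟩ ⟨_, _, rfl⟩
  exact ⟨a, b, by exact_mod_cast hab⟩

theorem stmt_15_general (D : ℤ) :
    (∃ x y z w : ℤ, ¬(x = 0 ∧ y = 0 ∧ z = 0 ∧ w = 0) ∧
      x ^ 2 + y ^ 2 - D * z ^ 2 - D * w ^ 2 = 0) ↔
    ∃ a b : ℤ, D = a ^ 2 + b ^ 2 := by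
  constructor
  · rintro ⟨x, y, z, w, hne, heq⟩
    have h : x ^ 2 + y ^ 2 = D * (z ^ 2 + w ^ 2) := by linear_combination heq
    refine Int.exists_sq_add_sq_of_mul h fun hzw ↦ hne ?_
    have hxy : x ^ 2 + y ^ 2 = 0 := by rw [h, hzw, mul_zero]
    simp only [sq, mul_self_add_mul_self_eq_zero] at hxy hzw
    exact ⟨hxy.1, hxy.2, hzw.1, hzw.2⟩
  · rintro ⟨a, b, rfl⟩
    exact ⟨a, b, 1, 0, by simp, by ring⟩

/-- For a positive integer D, the quadratic form x² + y² − Dz² − Dw² represents 0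
non-trivially over ℤ if and only if D is a sum of two integer squares. -/
theorem stmt_15 (D : ℤ) (hD : 0 < D) :
    (∃ x y z w : ℤ, ¬(x = 0 ∧ y = 0 ∧ z = 0 ∧ w = 0) ∧
      x ^ 2 + y ^ 2 - D * z ^ 2 - D * w ^ 2 = 0) ↔
    ∃ a b : ℤ, D = a ^ 2 + b ^ 2 :=
  stmt_15_general D
end

section
/- Let K = Q(√D) with D squarefree, D ≡ 2, 3 (mod 4), and let G be an integral Z-valued binary generalized quadratic form over K with associated quaternary quadratic form Q having Gram matrix M_Q. Then det(M_Q)/D² is an integer congruent to 0 or 1 modulo 4; in fact det(M_Q)/D² ≡ (N(b) + N(e) + df)² (mod 4), where a, b, c, e ∈ O_K and d, f ∈ Z are the coefficients of G. -/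
open Matrix

/-!
Since `det T = -4D`, `det M_Q = 16 D² det M_G = D² det (2 M_G)`. The matrix `2 M_G` is symmetric
with even diagonal, and expanding the determinant of such a 4 × 4 matrix gives
`(x₀₁ x₂₃ + x₀₂ x₁₃ + x₀₃ x₁₂)² + 4 r` with `r` an integer polynomial in the entries; for `2 M_G`
the square is `(N(b) + N(e) + df)²` and `r` is an algebraic integer. Conjugation acts on `2 M_G`
by the permutation `(0 2)(1 3)` of rows and columns, so its determinant, `N(b) + N(e) + df` and
hence `r` are fixed by `τ`; a conjugation-invariant algebraic integer of `ℚ(√D)` is a rational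
integer. Finally squares are `0` or `1` modulo `4`.
-/

theorem Matrix.det_fin_four_of {R : Type*} [CommRing R]
    (a b c d e f g h i j k l m n o p : R) :
    det !![a, b, c, d; e, f, g, h; i, j, k, l; m, n, o, p] =
      a * (f * (k * p - l * o) - g * (j * p - l * n) + h * (j * o - k * n))
      - b * (e * (k * p - l * o) - g * (i * p - l * m) + h * (i * o - k * m))
      + c * (e * (j * p - l * n) - f * (i * p - l * m) + h * (i * n - j * m))
      - d * (e * (j * o - k * n) - f * (i * o - k * m) + g * (i * n - j * m)) := by
  simp only [det_succ_row_zero, Fin.sum_univ_succ, Fin.succAbove, det_unique, of_apply, cons_val',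
    cons_val_fin_one, cons_val_zero, cons_val_one, cons_val_succ, cons_val, submatrix_apply,
    submatrix_submatrix, Function.comp_apply, Fin.succ_zero_eq_one, Fin.succ_one_eq_two,
    Fin.default_eq_zero, Fin.isValue, Fin.reduceSucc, Fin.castSucc_zero, Fin.castSucc_one,
    Fin.castSucc_succ, Fin.reduceCastSucc, Fin.reduceLT, Fin.lt_one_iff, Fin.reduceEq, Fin.succ_pos,
    Fin.val_succ, Fin.val_eq_zero, Fin.coe_ofNat_eq_mod, Nat.zero_mod, lt_self_iff_false,
    not_lt_zero, ↓reduceIte, Finset.univ_unique, Finset.sum_singleton]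
  ring

theorem Matrix.exists_det_fin_four_even_diag_eq_sq_add_four_mul {R : Type*} [CommRing R]
    (α₀ α₁ α₂ α₃ x₀₁ x₀₂ x₀₃ x₁₂ x₁₃ x₂₃ : R) :
    ∃ r : R, det !![2 * α₀, x₀₁, x₀₂, x₀₃;
                   x₀₁, 2 * α₁, x₁₂, x₁₃;
                   x₀₂, x₁₂, 2 * α₂, x₂₃;
                   x₀₃, x₁₃, x₂₃, 2 * α₃] =
      (x₀₁ * x₂₃ + x₀₂ * x₁₃ + x₀₃ * x₁₂) ^ 2 + 4 * r := by
  -- The fixed-point-free permutations give the square up to `4 ×` its cross terms. Every other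
  -- term has a diagonal factor `2 α_k` and is divisible by `4`: it either has a second diagonal
  -- factor or is one of the two equal orientations of a 3-cycle.
  refine ⟨4 * α₀ * α₁ * α₂ * α₃
    - (x₀₁ * x₂₃ * x₀₂ * x₁₃ + x₀₁ * x₂₃ * x₀₃ * x₁₂ + x₀₂ * x₁₃ * x₀₃ * x₁₂)
    - (α₂ * α₃ * x₀₁ ^ 2 + α₁ * α₃ * x₀₂ ^ 2 + α₁ * α₂ * x₀₃ ^ 2
        + α₀ * α₃ * x₁₂ ^ 2 + α₀ * α₂ * x₁₃ ^ 2 + α₀ * α₁ * x₂₃ ^ 2)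
    + (α₀ * x₁₂ * x₂₃ * x₁₃ + α₁ * x₀₂ * x₂₃ * x₀₃ + α₂ * x₀₁ * x₁₃ * x₀₃
        + α₃ * x₀₁ * x₁₂ * x₀₂), ?_⟩
  rw [det_fin_four_of]
  ring

theorem Matrix.det_fin_four_sqrt {R : Type*} [CommRing R] (s : R) :
    det !![1, s, 0, 0;
           0, 0, 1, s;
           1, -s, 0, 0;
           0, 0, 1, -s] = -4 * s ^ 2 := by
  rw [det_fin_four_of]
  ring

theorem Int.sq_emod_four_eq_zero_or_one (t : ℤ) : t ^ 2 % 4 = 0 ∨ t ^ 2 % 4 = 1 := by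
  rcases Int.even_or_odd t with ⟨k, rfl⟩ | ht
  · left
    rw [show (k + k) ^ 2 = 4 * k ^ 2 by ring, Int.mul_emod_right]
  · exact Or.inr (Int.sq_mod_four_eq_one_of_odd ht)

@[simp]
theorem Subalgebra.coe_ofNat {R A : Type*} [CommSemiring R] [Semiring A] [Algebra R A]
    (S : Subalgebra R A) (n : ℕ) [n.AtLeastTwo] : ((ofNat(n) : S) : A) = ofNat(n) :=
  rfl

section QuadraticField

variable {K : Type*} [Field K] [Algebra ℚ K] {sd : K} {τ : K →ₐ[ℚ] K}

theorem apply_apply_of_apply_sqrt_eq_neg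
    (hgen : ∀ x : K, ∃ a b : ℚ, x = algebraMap ℚ K a + algebraMap ℚ K b * sd)
    (hτ : τ sd = -sd) (x : K) : τ (τ x) = x := by
  obtain ⟨p, q, rfl⟩ := hgen x
  simp [hτ]

theorem exists_intCast_eq_of_isIntegral_of_apply_eq
    (hgen : ∀ x : K, ∃ a b : ℚ, x = algebraMap ℚ K a + algebraMap ℚ K b * sd)
    (hτ : τ sd = -sd) (hsd : sd ≠ 0) {x : K} (hx : IsIntegral ℤ x) (hfix : τ x = x) :
    ∃ n : ℤ, (n : K) = x := by
  have : CharZero K := charZero_of_injective_algebraMap (algebraMap ℚ K).injective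
  obtain ⟨p, q, rfl⟩ := hgen x
  obtain rfl : q = 0 := by
    simp only [map_add, map_mul, AlgHom.commutes, hτ] at hfix
    have : algebraMap ℚ K q * (2 * sd) = 0 := by linear_combination -hfix
    simpa [hsd] using this
  simp only [map_zero, zero_mul, add_zero] at hx ⊢
  obtain ⟨n, rfl⟩ := IsIntegrallyClosed.isIntegral_iff.mp
    ((isIntegral_algebraMap_iff (algebraMap ℚ K).injective).mp hx)
  exact ⟨n, by simp⟩

variable (τ) in
def twiceGramMatrix (a b c e : K) (d f : ℤ) : Matrix (Fin 4) (Fin 4) K :=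
  !![2 * a, b, d, e;
     b, 2 * c, τ e, f;
     d, τ e, 2 * τ a, τ b;
     e, f, τ b, 2 * τ c]

theorem exists_isIntegral_det_twiceGramMatrix {a b c e : K} (d f : ℤ)
    (ha : IsIntegral ℤ a) (hb : IsIntegral ℤ b) (hc : IsIntegral ℤ c) (he : IsIntegral ℤ e) :
    ∃ r : K, IsIntegral ℤ r ∧
      (twiceGramMatrix τ a b c e d f).det = (b * τ b + d * f + e * τ e) ^ 2 + 4 * r := by
  let O := integralClosure ℤ K
  obtain ⟨r, hr⟩ := exists_det_fin_four_even_diag_eq_sq_add_four_mul (R := O)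
    ⟨a, ha⟩ ⟨c, hc⟩ ⟨τ a, ha.map τ⟩ ⟨τ c, hc.map τ⟩ ⟨b, hb⟩ d ⟨e, he⟩ ⟨τ e, he.map τ⟩ f
    ⟨τ b, hb.map τ⟩
  refine ⟨r, r.2, ?_⟩
  have hrK := congrArg O.val hr
  rw [AlgHom.map_det] at hrK
  convert hrK using 2
  · ext i j
    fin_cases i <;> fin_cases j <;> simp [twiceGramMatrix]
  · simp

theorem apply_det_twiceGramMatrix (hinv : ∀ x, τ (τ x) = x) (a b c e : K) (d f : ℤ) :
    τ (twiceGramMatrix τ a b c e d f).det = (twiceGramMatrix τ a b c e d f).det := by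
  rw [AlgHom.map_det, ← det_submatrix_equiv_self (Equiv.swap 0 2 * Equiv.swap 1 3)]
  congr 1
  ext i j
  fin_cases i <;> fin_cases j <;> simp [twiceGramMatrix, Equiv.swap_apply_def, map_ofNat, hinv]

theorem exists_int_det_twiceGramMatrix
    (hgen : ∀ x : K, ∃ a b : ℚ, x = algebraMap ℚ K a + algebraMap ℚ K b * sd)
    (hτ : τ sd = -sd) (hsd : sd ≠ 0) {a b c e : K} (d f : ℤ)
    (ha : IsIntegral ℤ a) (hb : IsIntegral ℤ b) (hc : IsIntegral ℤ c) (he : IsIntegral ℤ e) :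
    ∃ t s : ℤ, (t : K) = b * τ b + e * τ e + ((d * f : ℤ) : K) ∧
      (twiceGramMatrix τ a b c e d f).det = (t : K) ^ 2 + 4 * s := by
  have hinv := apply_apply_of_apply_sqrt_eq_neg hgen hτ
  obtain ⟨r, hr, hdet⟩ := exists_isIntegral_det_twiceGramMatrix (τ := τ) d f ha hb hc he
  have htfix : τ (b * τ b + d * f + e * τ e) = b * τ b + d * f + e * τ e := by
    simp [hinv, mul_comm]
  obtain ⟨t, ht⟩ := exists_intCast_eq_of_isIntegral_of_apply_eq hgen hτ hsd
    (((hb.mul (hb.map τ)).add ((isIntegral_intCast d).mul (isIntegral_intCast f))).add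
      (he.mul (he.map τ))) htfix
  obtain ⟨s, hs⟩ : ∃ s : ℤ, (s : K) = r := by
    refine exists_intCast_eq_of_isIntegral_of_apply_eq hgen hτ hsd hr ?_
    have hfix := apply_det_twiceGramMatrix hinv a b c e d f
    rw [hdet, map_add, map_pow, htfix, map_mul, map_ofNat] at hfix
    have : CharZero K := charZero_of_injective_algebraMap (algebraMap ℚ K).injective
    exact mul_left_cancel₀ (by norm_num : (4 : K) ≠ 0) (by linear_combination hfix)
  refine ⟨t, s, ?_, ?_⟩
  · push_cast [ht]
    ring
  · rw [hdet, ht, hs]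

end QuadraticField

theorem stmt_17_general (D : ℤ) (hD0 : D ≠ 0)
    (K : Type*) [Field K] [Algebra ℚ K] (sd : K) (hsd : sd ^ 2 = (D : K))
    (hgen : ∀ x : K, ∃ a b : ℚ, x = algebraMap ℚ K a + algebraMap ℚ K b * sd)
    (τ : K →ₐ[ℚ] K) (hτ : τ sd = -sd)
    (a b c e : K) (d f : ℤ)
    (ha : a ∈ integralClosure ℤ K) (hb : b ∈ integralClosure ℤ K)
    (hc : c ∈ integralClosure ℤ K) (he : e ∈ integralClosure ℤ K)
    (MG T MQ : Matrix (Fin 4) (Fin 4) K)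
    (hMG : MG = !![a, b / 2, (d : K) / 2, e / 2;
                   b / 2, c, τ e / 2, (f : K) / 2;
                   (d : K) / 2, τ e / 2, τ a, τ b / 2;
                   e / 2, (f : K) / 2, τ b / 2, τ c])
    (hT : T = !![1, sd, 0, 0;
                 0, 0, 1, sd;
                 1, -sd, 0, 0;
                 0, 0, 1, -sd])
    (hMQ : MQ = Tᵀ * MG * T) :
    ∃ m t : ℤ, MQ.det = (D : K) ^ 2 * (m : K) ∧
      (t : K) = b * τ b + e * τ e + ((d * f : ℤ) : K) ∧
      m % 4 = t ^ 2 % 4 ∧ (m % 4 = 0 ∨ m % 4 = 1) := by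
  have : CharZero K := charZero_of_injective_algebraMap (algebraMap ℚ K).injective
  have hsd0 : sd ≠ 0 := by
    rintro rfl
    simp [eq_comm, hD0] at hsd
  have htwice : (2 : K) • MG = twiceGramMatrix τ a b c e d f := by
    rw [hMG]
    ext i j
    fin_cases i <;> fin_cases j <;> simp [twiceGramMatrix, mul_div_cancel₀]
  have hdetMQ : MQ.det = D ^ 2 * (twiceGramMatrix τ a b c e d f).det := by
    rw [hMQ, det_mul, det_mul, det_transpose, hT, det_fin_four_sqrt, hsd, ← htwice, det_smul,
      Fintype.card_fin]
    ring
  obtain ⟨t, s, ht, hdet⟩ := exists_int_det_twiceGramMatrix hgen hτ hsd0 d f ha hb hc he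
  refine ⟨t ^ 2 + 4 * s, t, ?_, ht, Int.add_mul_emod_self_left _ _ _, ?_⟩
  · rw [hdetMQ, hdet]
    push_cast
    ring
  · rw [Int.add_mul_emod_self_left]
    exact Int.sq_emod_four_eq_zero_or_one t

/-- Let D ≡ 2,3 (mod 4) be squarefree and G an integral ℤ-valued binary generalized
quadratic form over K = ℚ(√D) with coefficients a, b, c, e ∈ O_K and d, f ∈ ℤ. Then
det(M_Q)/D² is an integer congruent to 0 or 1 mod 4; in fact
det(M_Q)/D² ≡ (N(b) + N(e) + df)² (mod 4). -/
theorem stmt_17 (D : ℤ) (hsq : Squarefree D) (hD0 : D ≠ 0) (hD1 : D ≠ 1)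
    (hD4 : D % 4 = 2 ∨ D % 4 = 3)
    (K : Type*) [Field K] [Algebra ℚ K] (sd : K) (hsd : sd ^ 2 = (D : K))
    (hgen : ∀ x : K, ∃ a b : ℚ, x = algebraMap ℚ K a + algebraMap ℚ K b * sd)
    (τ : K →ₐ[ℚ] K) (hτ : τ sd = -sd)
    (a b c e : K) (d f : ℤ)
    (ha : a ∈ integralClosure ℤ K) (hb : b ∈ integralClosure ℤ K)
    (hc : c ∈ integralClosure ℤ K) (he : e ∈ integralClosure ℤ K)
    (MG T MQ : Matrix (Fin 4) (Fin 4) K)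
    (hMG : MG = !![a, b / 2, (d : K) / 2, e / 2;
                   b / 2, c, τ e / 2, (f : K) / 2;
                   (d : K) / 2, τ e / 2, τ a, τ b / 2;
                   e / 2, (f : K) / 2, τ b / 2, τ c])
    (hT : T = !![1, sd, 0, 0;
                 0, 0, 1, sd;
                 1, -sd, 0, 0;
                 0, 0, 1, -sd])
    (hMQ : MQ = Tᵀ * MG * T) :
    ∃ m t : ℤ, MQ.det = (D : K) ^ 2 * (m : K) ∧
      (t : K) = b * τ b + e * τ e + ((d * f : ℤ) : K) ∧
      m % 4 = t ^ 2 % 4 ∧ (m % 4 = 0 ∨ m % 4 = 1) :=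
  stmt_17_general D hD0 K sd hsd hgen τ hτ a b c e d f ha hb hc he MG T MQ hMG hT hMQ
end

section
/- Let K = Q(√D) with D squarefree, D ≡ 3 (mod 4), and let G be an integral binary generalized quadratic form over K with G(a) ∈ Q for all a ∈ K², and let Q be the associated quaternary quadratic form with Gram matrix M_Q. Then the rank of M_Q modulo 2 is even, i.e., rank(M_Q mod 2) ∈ {0, 2, 4}. -/
open Matrix

section Helpers

private lemma sq_int_isIntegral (x : ℚ) (k : ℤ) (h : x^2 = (k:ℚ)) : IsIntegral ℤ x := by
  refine ⟨Polynomial.X^2 - Polynomial.C k, Polynomial.monic_X_pow_sub_C _ (by norm_num), ?_⟩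
  simp only [Polynomial.eval₂_sub, Polynomial.eval₂_C, Polynomial.eval₂_X_pow, h]
  simp

private lemma sqfree_rat (D : ℤ) (hsq : Squarefree D) (hD0 : D ≠ 0) (ρ : ℚ) (k : ℤ)
    (h : ρ^2 * (D:ℚ) = (k:ℚ)) : ∃ t : ℤ, (t:ℚ) = ρ := by
  have hx : (ρ * D)^2 = ((k*D : ℤ) : ℚ) := by push_cast; linear_combination (D:ℚ) * h
  obtain ⟨j, hj⟩ := IsIntegrallyClosed.isIntegral_iff.mp (sq_int_isIntegral _ _ hx)
  have hj' : (j : ℚ) = ρ * D := hj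
  have hj2 : j^2 = k * D := by exact_mod_cast (hj' ▸ hx : ((j:ℚ))^2 = ((k*D:ℤ):ℚ))
  obtain ⟨t, ht⟩ := (hsq.dvd_pow_iff_dvd two_ne_zero).mp (⟨k, by linarith [hj2]⟩ : D ∣ j^2)
  refine ⟨t, ?_⟩
  have hD : (D:ℚ) ≠ 0 := Int.cast_ne_zero.mpr hD0
  have h2 : (j : ℚ) = (D:ℚ) * t := by exact_mod_cast congrArg (Int.cast : ℤ → ℚ) ht
  rw [hj'] at h2
  exact (mul_right_cancel₀ hD (by linarith [h2] : ρ * (D:ℚ) = (t:ℚ) * D)).symm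

private lemma repr_int (D : ℤ) (hsq : Squarefree D) (hD4 : D % 4 = 3)
    (K : Type*) [Field K] [Algebra ℚ K] (sd : K) (hsd : sd ^ 2 = (D : K))
    (τ : K →ₐ[ℚ] K) (hτ : τ sd = -sd)
    (x : K) (hx : x ∈ integralClosure ℤ K) (q r : ℚ)
    (hqr : x = algebraMap ℚ K q + algebraMap ℚ K r * sd) :
    ∃ m n : ℤ, x = (m:K) + (n:K) * sd ∧ τ x = (m:K) - (n:K) * sd := by
  have hD0 : D ≠ 0 := by omega
  have hxint : IsIntegral ℤ x := hx
  have hτx : IsIntegral ℤ (τ x) := IsIntegral.map τ.toRingHom.toIntAlgHom hxint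
  have hτeq : τ x = algebraMap ℚ K q - algebraMap ℚ K r * sd := by
    rw [hqr]; rw [_root_.map_add, _root_.map_mul, hτ]; simp only [AlgHom.commutes]; ring
  have hDcast : sd^2 = algebraMap ℚ K ((D:ℚ)) := by
    rw [hsd]; exact (map_intCast (algebraMap ℚ K) D).symm
  have htr : x + τ x = algebraMap ℚ K (2*q) := by
    rw [hτeq, hqr, _root_.map_mul, _root_.map_ofNat]; ring
  have hnorm : x * τ x = algebraMap ℚ K (q^2 - r^2*D) := by
    rw [hτeq, hqr, _root_.map_sub, _root_.map_pow, _root_.map_mul, _root_.map_pow, map_intCast]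
    have : (D : K) = algebraMap ℚ K ((D:ℚ)) := (map_intCast (algebraMap ℚ K) D).symm
    rw [this]
    linear_combination (-(algebraMap ℚ K r)^2) * hDcast
  obtain ⟨m', hm'⟩ := IsIntegrallyClosed.isIntegral_iff.mp
    ((isIntegral_algebraMap_iff (algebraMap ℚ K).injective).mp (htr ▸ hxint.add hτx))
  obtain ⟨n', hn'⟩ := IsIntegrallyClosed.isIntegral_iff.mp
    ((isIntegral_algebraMap_iff (algebraMap ℚ K).injective).mp (hnorm ▸ hxint.mul hτx))
  have hm'' : (m' : ℚ) = 2*q := hm'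
  have hn'' : (n' : ℚ) = q^2 - r^2*D := hn'
  obtain ⟨t, ht⟩ := sqfree_rat D hsq hD0 (2*r) (m'^2 - 4*n') (by
    push_cast
    linear_combination (-((m':ℚ) + 2*q))*hm'' + 4*hn'')
  have h4 : m'^2 - t^2*D = 4*n' := by
    have : ((m'^2 - t^2*D : ℤ):ℚ) = ((4*n' : ℤ):ℚ) := by
      push_cast
      linear_combination ((m':ℚ)+2*q)*hm'' - ((t:ℚ)+2*r)*(D:ℚ)*ht - 4*hn''
    exact_mod_cast this
  obtain ⟨s, hs⟩ : ∃ s, D = 4*s+3 := ⟨D/4, by omega⟩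
  rcases Int.even_or_odd m' with ⟨u,hu⟩|⟨u,hu⟩ <;> rcases Int.even_or_odd t with ⟨v,hv⟩|⟨v,hv⟩
  · refine ⟨u, v, ?_, ?_⟩
    · have hq : q = (u:ℚ) := by push_cast [hu] at hm''; linarith
      have hr : r = (v:ℚ) := by push_cast [hv] at ht; linarith
      rw [hqr, hq, hr]; simp
    · have hq : q = (u:ℚ) := by push_cast [hu] at hm''; linarith
      have hr : r = (v:ℚ) := by push_cast [hv] at ht; linarith
      rw [hτeq, hq, hr]; simp
  · exfalso
    obtain ⟨U,V,W1,W2,key⟩ : ∃ U V W1 W2 : ℤ,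
        4*n' = 4*U - 16*W1 - 16*W2 - 12*V - 12*v - 4*s - 3 :=
      ⟨u*u, v*v, v*v*s, v*s, by rw [← h4, hu, hv, hs]; ring⟩
    omega
  · exfalso
    obtain ⟨U,V,W,key⟩ : ∃ U V W : ℤ, 4*n' = 4*U + 1 - 16*W - 12*V :=
      ⟨u*u+u, v*v, v*v*s, by rw [← h4, hu, hv, hs]; ring⟩
    omega
  · exfalso
    obtain ⟨A,B,W,key⟩ : ∃ A B W : ℤ, 4*n' = 4*A - 16*W - 12*B - 4*s - 2 :=
      ⟨u*u+u, v*v+v, (v*v+v)*s, by rw [← h4, hu, hv, hs]; ring⟩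
    omega

private lemma isUnit_of_det_one {n : ℕ} {M : Matrix (Fin n) (Fin n) (ZMod 2)} (h : M.det = 1) :
    IsUnit M :=
  (Matrix.isUnit_iff_isUnit_det _).mpr (h ▸ isUnit_one)

private lemma rank_eq_four {M : Matrix (Fin 4) (Fin 4) (ZMod 2)} (h : M.det = 1) : M.rank = 4 := by
  rw [Matrix.rank_of_isUnit _ (isUnit_of_det_one h)]; simp

private lemma rank_eq_two {M : Matrix (Fin 4) (Fin 4) (ZMod 2)}
    (B : Matrix (Fin 4) (Fin 2) (ZMod 2))
    (C : Matrix (Fin 2) (Fin 4) (ZMod 2)) (E : Matrix (Fin 2) (Fin 4) (ZMod 2))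
    (F : Matrix (Fin 4) (Fin 2) (ZMod 2)) (h1 : M = B * C) (h2 : (E * M * F).det = 1) :
    M.rank = 2 := by
  refine le_antisymm ?_ ?_
  · rw [h1]
    exact le_trans (Matrix.rank_mul_le_right _ _) (by simpa using Matrix.rank_le_card_height C)
  · have hr : (E * M * F).rank = 2 := by
      rw [Matrix.rank_of_isUnit _ (isUnit_of_det_one h2)]; simp
    calc 2 = (E * M * F).rank := hr.symm
      _ = (E * (M * F)).rank := by rw [Matrix.mul_assoc]
      _ ≤ (M * F).rank := Matrix.rank_mul_le_right _ _
      _ ≤ M.rank := Matrix.rank_mul_le_left _ _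

private lemma rank_even (d f B E : ZMod 2) :
    (!![d,0,B,E;0,d,E,B;B,E,f,0;E,B,0,f]).rank = 0 ∨
    (!![d,0,B,E;0,d,E,B;B,E,f,0;E,B,0,f]).rank = 2 ∨
    (!![d,0,B,E;0,d,E,B;B,E,f,0;E,B,0,f]).rank = 4 := by
  have h2 : ∀ x : ZMod 2, x = 0 ∨ x = 1 := by decide
  rcases h2 d with rfl|rfl <;> rcases h2 f with rfl|rfl <;>
    rcases h2 B with rfl|rfl <;> rcases h2 E with rfl|rfl
  · exact Or.inl (by
      rw [show (!![(0:ZMod 2),0,0,0;0,0,0,0;0,0,0,0;0,0,0,0]) = 0 from by decide]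
      exact Matrix.rank_zero)
  · exact Or.inr (Or.inr (rank_eq_four (by decide)))
  · exact Or.inr (Or.inr (rank_eq_four (by decide)))
  · exact Or.inr (Or.inl (rank_eq_two !![1,0;1,0;0,1;0,1] !![0,0,1,1;1,1,0,0]
      !![1,0,0,0;0,0,1,0] !![1,0;0,0;0,1;0,0] (by decide) (by decide)))
  · exact Or.inr (Or.inl (rank_eq_two !![0,0;0,0;1,0;0,1] !![0,0,1,0;0,0,0,1]
      !![0,0,1,0;0,0,0,1] !![0,0;0,0;1,0;0,1] (by decide) (by decide)))
  · exact Or.inr (Or.inr (rank_eq_four (by decide)))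
  · exact Or.inr (Or.inr (rank_eq_four (by decide)))
  · exact Or.inr (Or.inl (rank_eq_two !![1,1;1,1;1,0;0,1] !![1,1,1,0;1,1,0,1]
      !![0,0,1,0;0,0,0,1] !![0,0;0,0;1,0;0,1] (by decide) (by decide)))
  · exact Or.inr (Or.inl (rank_eq_two !![1,0;0,1;0,0;0,0] !![1,0,0,0;0,1,0,0]
      !![1,0,0,0;0,1,0,0] !![1,0;0,1;0,0;0,0] (by decide) (by decide)))
  · exact Or.inr (Or.inr (rank_eq_four (by decide)))
  · exact Or.inr (Or.inr (rank_eq_four (by decide)))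
  · exact Or.inr (Or.inl (rank_eq_two !![1,0;0,1;1,1;1,1] !![1,0,1,1;0,1,1,1]
      !![1,0,0,0;0,1,0,0] !![1,0;0,1;0,0;0,0] (by decide) (by decide)))
  · exact Or.inr (Or.inr (rank_eq_four (by decide)))
  · exact Or.inr (Or.inl (rank_eq_two !![1,0;0,1;0,1;1,0] !![1,0,0,1;0,1,1,0]
      !![1,0,0,0;0,1,0,0] !![1,0;0,1;0,0;0,0] (by decide) (by decide)))
  · exact Or.inr (Or.inl (rank_eq_two !![1,0;0,1;1,0;0,1] !![1,0,1,0;0,1,0,1]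
      !![1,0,0,0;0,1,0,0] !![1,0;0,1;0,0;0,0] (by decide) (by decide)))
  · exact Or.inr (Or.inr (rank_eq_four (by decide)))

end Helpers

/-- Let D ≡ 3 (mod 4) be squarefree and G an integral binary generalized quadratic form
over K = ℚ(√D) (with the conjugate-coefficient structure forced by ℚ-valuedness, so
with coefficients a, b, c, e ∈ O_K and d, f ∈ ℤ). Then the Gram matrix M_Q of the
associated quaternary form Q has integer entries and its rank modulo 2 is even. -/
theorem stmt_18 (D : ℤ) (hsq : Squarefree D) (hD4 : D % 4 = 3)
    (K : Type*) [Field K] [Algebra ℚ K] (sd : K) (hsd : sd ^ 2 = (D : K))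
    (hgen : ∀ x : K, ∃ a b : ℚ, x = algebraMap ℚ K a + algebraMap ℚ K b * sd)
    (τ : K →ₐ[ℚ] K) (hτ : τ sd = -sd)
    (a b c e : K) (d f : ℤ)
    (ha : a ∈ integralClosure ℤ K) (hb : b ∈ integralClosure ℤ K)
    (hc : c ∈ integralClosure ℤ K) (he : e ∈ integralClosure ℤ K)
    (MG T MQ : Matrix (Fin 4) (Fin 4) K)
    (hMG : MG = !![a, b / 2, (d : K) / 2, e / 2;
                   b / 2, c, τ e / 2, (f : K) / 2;
                   (d : K) / 2, τ e / 2, τ a, τ b / 2;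
                   e / 2, (f : K) / 2, τ b / 2, τ c])
    (hT : T = !![1, sd, 0, 0;
                 0, 0, 1, sd;
                 1, -sd, 0, 0;
                 0, 0, 1, -sd])
    (hMQ : MQ = Tᵀ * MG * T) :
    ∃ N : Matrix (Fin 4) (Fin 4) ℤ, (∀ i j, ((N i j : ℤ) : K) = MQ i j) ∧
      ((N.map (Int.cast : ℤ → ZMod 2)).rank = 0 ∨
       (N.map (Int.cast : ℤ → ZMod 2)).rank = 2 ∨
       (N.map (Int.cast : ℤ → ZMod 2)).rank = 4) := by
  haveI : CharZero K := charZero_of_injective_algebraMap (algebraMap ℚ K).injective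
  obtain ⟨qa, ra, hqa⟩ := hgen a
  obtain ⟨a1, a2, haeq, haτ⟩ := repr_int D hsq hD4 K sd hsd τ hτ a ha qa ra hqa
  obtain ⟨qb, rb, hqb⟩ := hgen b
  obtain ⟨b1, b2, hbeq, hbτ⟩ := repr_int D hsq hD4 K sd hsd τ hτ b hb qb rb hqb
  obtain ⟨qc, rc, hqc⟩ := hgen c
  obtain ⟨c1, c2, hceq, hcτ⟩ := repr_int D hsq hD4 K sd hsd τ hτ c hc qc rc hqc
  obtain ⟨qe, re, hqe⟩ := hgen e
  obtain ⟨e1, e2, heeq, heτ⟩ := repr_int D hsq hD4 K sd hsd τ hτ e he qe re hqe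
  subst hMQ hT hMG
  refine ⟨!![2*a1+d, 2*a2*D, b1+e1, D*(b2-e2);
             2*a2*D, D*(2*a1-d), D*(b2+e2), D*(b1-e1);
             b1+e1, D*(b2+e2), 2*c1+f, 2*c2*D;
             D*(b2-e2), D*(b1-e1), 2*c2*D, D*(2*c1-f)], ?_, ?_⟩
  · intro i j
    fin_cases i <;> fin_cases j
    all_goals
      simp only [Matrix.mul_apply, Matrix.transpose_apply, Fin.sum_univ_four]
      simp
      simp only [haτ, hbτ, hcτ, heτ]
      simp only [haeq, hbeq, hceq, heeq]
      try push_cast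
      ring_nf
      try rw [hsd]
      try push_cast
      try ring_nf
      try field_simp
      try ring
  · have hD1 : ((D:ℤ) : ZMod 2) = 1 := by
      have : ((D:ℤ) : ZMod 2) = ((1:ℤ) : ZMod 2) :=
        (ZMod.intCast_eq_intCast_iff _ _ _).mpr (by show D % 2 = 1 % 2; omega)
      simpa using this
    have h2 : (2 : ZMod 2) = 0 := by decide
    have hmap : (Matrix.map !![2*a1+d, 2*a2*D, b1+e1, D*(b2-e2);
             2*a2*D, D*(2*a1-d), D*(b2+e2), D*(b1-e1);
             b1+e1, D*(b2+e2), 2*c1+f, 2*c2*D;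
             D*(b2-e2), D*(b1-e1), 2*c2*D, D*(2*c1-f)] (Int.cast : ℤ → ZMod 2)) =
        !![(d:ZMod 2),0,((b1:ZMod 2)+(e1:ZMod 2)),((b2:ZMod 2)+(e2:ZMod 2));
           0,(d:ZMod 2),((b2:ZMod 2)+(e2:ZMod 2)),((b1:ZMod 2)+(e1:ZMod 2));
           ((b1:ZMod 2)+(e1:ZMod 2)),((b2:ZMod 2)+(e2:ZMod 2)),(f:ZMod 2),0;
           ((b2:ZMod 2)+(e2:ZMod 2)),((b1:ZMod 2)+(e1:ZMod 2)),0,(f:ZMod 2)] := by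
      ext i j
      fin_cases i <;> fin_cases j
      all_goals
        simp only [Matrix.map_apply]
        simp
        try push_cast
        try simp only [hD1, h2, sub_eq_add_neg, CharTwo.neg_eq]
        try simp
        try ring
    rw [hmap]
    exact rank_even _ _ _ _
end
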